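/- arXiv:math/9903139 — 8 statements merged into one kernel-verified Lean document; each statement's English description precedes it below -/
import Mathlib

section
/- Let X be a Banach function space on a measure space (Ω,Σ,μ), let φ ∈ L∞(μ), and let M_φ : X → X be the multiplication operator f ↦ φf. If R : X → X is a bounded operator commuting with M_φ, then for every real α, R leaves invariant the band B = {f ∈ X : f = 0 a.e. on the complement of E^α}, where E^α = {ω ∈ Ω : φ(ω) ≤ α}. That is, if f ∈ X vanishes a.e. outside E^α, then Rf vanishes a.e. outside E^α. -/
/-!
By Weierstrass, on the bounded range of `φ` a continuous cutoff `ψ` vanishing on `(-∞, α]` and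
positive on `(α, ∞)` is a uniform limit of polynomials `p`. The operators `p(M_φ)` commute with
`R` and multiply by `p ∘ φ`, and the solid norm turns the uniform estimate `|p ∘ φ - ψ ∘ φ| ≤ ε`
into norm estimates; hence `R` commutes with multiplication by `ψ ∘ φ` (which acts on `X` by the
ideal property). Multiplication by `ψ ∘ φ` kills `f`, so it kills `R f`, i.e. `R f` vanishes
where `φ > α`.
-/

open MeasureTheory Filter Topology Polynomial

theorem nonpos_of_forall_pos_le_mul {a K : ℝ} (h : ∀ ε > 0, a ≤ ε * K) : a ≤ 0 := by
  have hlim : Tendsto (fun ε => ε * K) (𝓝[>] 0) (𝓝 0) := by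
    simpa using ((continuous_mul_const K).tendsto 0).mono_left nhdsWithin_le_nhds
  exact ge_of_tendsto hlim (eventually_nhdsWithin_of_forall h)

def rampAbove (α t : ℝ) : ℝ := min (max (t - α) 0) 1

theorem continuous_rampAbove (α : ℝ) : Continuous (rampAbove α) := by
  unfold rampAbove; fun_prop

theorem abs_rampAbove_le_one (α t : ℝ) : |rampAbove α t| ≤ 1 := by
  unfold rampAbove
  rw [abs_le]; constructor <;> simp

theorem rampAbove_eq_zero {α t : ℝ} (h : t ≤ α) : rampAbove α t = 0 := by
  simp [rampAbove, h]

theorem rampAbove_pos {α t : ℝ} (h : α < t) : 0 < rampAbove α t := by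
  simp [rampAbove, h]

section

variable {Ω : Type*} [MeasurableSpace Ω] {μ : Measure Ω}

section Module

variable {E : Type*} [AddCommGroup E] [Module ℝ E] (ι : E →ₗ[ℝ] (Ω →ₘ[μ] ℝ))

theorem coeFn_map_zero : ⇑(ι 0) =ᵐ[μ] 0 := by
  rw [map_zero]; exact AEEqFun.coeFn_zero

theorem coeFn_map_smul (c : ℝ) (x : E) : ⇑(ι (c • x)) =ᵐ[μ] fun ω => c * ι x ω := by
  rw [map_smul]; exact AEEqFun.coeFn_smul c (ι x)

theorem coeFn_map_sub (x y : E) : ⇑(ι (x - y)) =ᵐ[μ] fun ω => ι x ω - ι y ω := by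
  rw [map_sub]; exact AEEqFun.coeFn_sub (ι x) (ι y)

theorem exists_coeFn_ae_eq_mul
    (hideal : ∀ (f : E) (g : Ω →ₘ[μ] ℝ),
      (∀ᵐ ω ∂μ, |(g : Ω → ℝ) ω| ≤ |(ι f : Ω → ℝ) ω|) → ∃ h : E, ι h = g)
    {h : Ω → ℝ} (hm : AEStronglyMeasurable h μ) (hh : ∀ᵐ ω ∂μ, |h ω| ≤ 1) (f : E) :
    ∃ w : E, ⇑(ι w) =ᵐ[μ] fun ω => h ω * ι f ω := by
  have hG : ⇑(AEEqFun.mk h hm * ι f) =ᵐ[μ] fun ω => h ω * ι f ω := by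
    filter_upwards [AEEqFun.coeFn_mul (AEEqFun.mk h hm) (ι f), AEEqFun.coeFn_mk h hm]
      with ω hmul hmk
    rw [hmul, Pi.mul_apply, hmk]
  obtain ⟨w, hw⟩ := hideal f _ <| by
    filter_upwards [hG, hh] with ω hGω hhω
    rw [hGω, abs_mul]
    exact mul_le_of_le_one_left (abs_nonneg _) hhω
  exact ⟨w, hw ▸ hG⟩

end Module

section Normed

variable {E : Type*} [NormedAddCommGroup E] [NormedSpace ℝ E] (ι : E →ₗ[ℝ] (Ω →ₘ[μ] ℝ))

theorem coeFn_aeval_apply {M : E →L[ℝ] E} {φ : Ω → ℝ}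
    (hM : ∀ f : E, ⇑(ι (M f)) =ᵐ[μ] fun ω => φ ω * ι f ω) (p : ℝ[X]) (f : E) :
    ⇑(ι (aeval M p f)) =ᵐ[μ] fun ω => p.eval (φ ω) * ι f ω := by
  induction p using Polynomial.induction_on generalizing f with
  | C a =>
    simpa [Algebra.algebraMap_eq_smul_one] using coeFn_map_smul ι a f
  | add p q hp hq =>
    rw [map_add, add_apply, map_add]
    filter_upwards [AEEqFun.coeFn_add (ι (aeval M p f)) (ι (aeval M q f)), hp f, hq f]
      with ω hadd hpω hqω
    rw [hadd, Pi.add_apply, hpω, hqω, eval_add, add_mul]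
  | monomial n a hp =>
    rw [pow_succ, ← mul_assoc, map_mul, aeval_X, mul_apply_eq_comp]
    filter_upwards [hp (M f), hM f] with ω hpω hMω
    rw [hpω, hMω]
    simp only [eval_mul, eval_X]
    ring

end Normed

section Lattice

variable {E : Type*} [NormedAddCommGroup E] [Lattice E] [HasSolidNorm E] [IsOrderedAddMonoid E]
  [NormedSpace ℝ E] (ι : E →ₗ[ℝ] (Ω →ₘ[μ] ℝ))

theorem norm_le_mul_norm_of_coeFn_ae_eq_mul
    (hι_mono : ∀ f g : E, (∀ᵐ ω ∂μ, ι f ω ≤ ι g ω) → f ≤ g)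
    (hι_abs : ∀ f : E, ⇑(ι |f|) =ᵐ[μ] fun ω => |ι f ω|)
    {h : Ω → ℝ} {c : ℝ} (hc : 0 ≤ c) (hh : ∀ᵐ ω ∂μ, |h ω| ≤ c) {a b : E}
    (hab : ⇑(ι a) =ᵐ[μ] fun ω => h ω * ι b ω) : ‖a‖ ≤ c * ‖b‖ := by
  have hcb : ⇑(ι (c • |b|)) =ᵐ[μ] fun ω => c * |ι b ω| := by
    filter_upwards [coeFn_map_smul ι c |b|, hι_abs b] with ω hsmul habs
    rw [hsmul, habs]
  have hcb_nonneg : 0 ≤ c • |b| := hι_mono _ _ <| by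
    filter_upwards [coeFn_map_zero ι, hcb] with ω hzero hcbω
    rw [hzero, hcbω]
    exact mul_nonneg hc (abs_nonneg _)
  have habs_le : |a| ≤ c • |b| := hι_mono _ _ <| by
    filter_upwards [hι_abs a, hcb, hab, hh] with ω haω hcbω habω hhω
    rw [haω, hcbω, habω, abs_mul]
    exact mul_le_mul_of_nonneg_right hhω (abs_nonneg _)
  calc ‖a‖ = ‖|a|‖ := (norm_abs_eq_norm a).symm
    _ ≤ ‖c • |b|‖ := norm_le_norm_of_abs_le_abs (by rwa [abs_abs, abs_of_nonneg hcb_nonneg])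
    _ = c * ‖b‖ := by rw [norm_smul, norm_abs_eq_norm, Real.norm_of_nonneg hc]

theorem eq_apply_of_commute_of_coeFn_ae_eq_mul
    (hι_mono : ∀ f g : E, (∀ᵐ ω ∂μ, ι f ω ≤ ι g ω) → f ≤ g)
    (hι_abs : ∀ f : E, ⇑(ι |f|) =ᵐ[μ] fun ω => |ι f ω|)
    {M : E →L[ℝ] E} {φ : Ω → ℝ} (hM : ∀ f : E, ⇑(ι (M f)) =ᵐ[μ] fun ω => φ ω * ι f ω)
    (hφ_bdd : ∃ C : ℝ, ∀ ω, |φ ω| ≤ C) {R : E →L[ℝ] E} (hRM : Commute R M)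
    {ψ : ℝ → ℝ} (hψ : Continuous ψ) {f u w : E}
    (hu : ⇑(ι u) =ᵐ[μ] fun ω => ψ (φ ω) * ι f ω)
    (hw : ⇑(ι w) =ᵐ[μ] fun ω => ψ (φ ω) * ι (R f) ω) : w = R u := by
  obtain ⟨C, hC⟩ := hφ_bdd
  rw [← sub_eq_zero, ← norm_le_zero_iff]
  refine nonpos_of_forall_pos_le_mul (K := ‖R f‖ + ‖R‖ * ‖f‖) fun ε hε => ?_
  obtain ⟨p, hp⟩ := exists_polynomial_near_of_continuousOn (-C) C ψ hψ.continuousOn ε hε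
  have hpψ (ω : Ω) : |p.eval (φ ω) - ψ (φ ω)| ≤ ε := (hp _ (abs_le.mp (hC ω))).le
  set T := aeval M p
  have hRT : Commute R T :=
    Algebra.commute_of_mem_adjoin_singleton_of_commute (aeval_mem_adjoin_singleton ℝ M) hRM
  have hTf : ‖T f - u‖ ≤ ε * ‖f‖ := by
    refine norm_le_mul_norm_of_coeFn_ae_eq_mul ι hι_mono hι_abs hε.le (ae_of_all _ hpψ) ?_
    filter_upwards [coeFn_map_sub ι (T f) u, coeFn_aeval_apply ι hM p f, hu]
      with ω hsub hTω huω
    rw [hsub, hTω, huω, sub_mul]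
  have hTRf : ‖w - T (R f)‖ ≤ ε * ‖R f‖ := by
    refine norm_le_mul_norm_of_coeFn_ae_eq_mul ι hι_mono hι_abs hε.le
      (ae_of_all _ fun ω => abs_sub_comm (p.eval (φ ω)) (ψ (φ ω)) ▸ hpψ ω) ?_
    filter_upwards [coeFn_map_sub ι w (T (R f)), hw, coeFn_aeval_apply ι hM p (R f)]
      with ω hsub hwω hTω
    rw [hsub, hwω, hTω, sub_mul]
  have hTR_apply : T (R f) = R (T f) := (DFunLike.congr_fun hRT.eq f).symm
  calc ‖w - R u‖ = ‖(w - T (R f)) + R (T f - u)‖ := by rw [map_sub, hTR_apply]; abel_nf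
    _ ≤ ‖w - T (R f)‖ + ‖R‖ * ‖T f - u‖ :=
      (norm_add_le _ _).trans (by gcongr; exact R.le_opNorm _)
    _ ≤ ε * ‖R f‖ + ‖R‖ * (ε * ‖f‖) := by gcongr
    _ = ε * (‖R f‖ + ‖R‖ * ‖f‖) := by ring

end Lattice

end

theorem multiplication_commutant_leaves_sublevel_band_invariant_general
    {Ω : Type*} [MeasurableSpace Ω] {μ : Measure Ω}
    {X : Type*} [NormedAddCommGroup X] [Lattice X] [HasSolidNorm X] [IsOrderedAddMonoid X] [NormedSpace ℝ X]
    (ι : X →ₗ[ℝ] (Ω →ₘ[μ] ℝ))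
    (hι_mono : ∀ f g : X, f ≤ g ↔ ∀ᵐ ω ∂μ, (ι f : Ω → ℝ) ω ≤ (ι g : Ω → ℝ) ω)
    (hι_abs : ∀ f : X, (ι |f| : Ω → ℝ) =ᵐ[μ] fun ω => |(ι f : Ω → ℝ) ω|)
    (hideal : ∀ (f : X) (g : Ω →ₘ[μ] ℝ),
      (∀ᵐ ω ∂μ, |(g : Ω → ℝ) ω| ≤ |(ι f : Ω → ℝ) ω|) → ∃ h : X, ι h = g)
    (φ : Ω → ℝ) (hφ_meas : Measurable φ) (hφ_bdd : ∃ C : ℝ, ∀ ω, |φ ω| ≤ C)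
    (Mφ : X →L[ℝ] X)
    (hMφ : ∀ f : X, (ι (Mφ f) : Ω → ℝ) =ᵐ[μ] fun ω => φ ω * (ι f : Ω → ℝ) ω)
    (R : X →L[ℝ] X) (hcomm : R.comp Mφ = Mφ.comp R)
    (α : ℝ) (f : X)
    (hf : ∀ᵐ ω ∂μ, α < φ ω → (ι f : Ω → ℝ) ω = 0) :
    ∀ᵐ ω ∂μ, α < φ ω → (ι (R f) : Ω → ℝ) ω = 0 := by
  have hψφ : AEStronglyMeasurable (fun ω => rampAbove α (φ ω)) μ :=
    ((continuous_rampAbove α).measurable.comp hφ_meas).aestronglyMeasurable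
  obtain ⟨w, hw⟩ := exists_coeFn_ae_eq_mul ι hideal hψφ
    (ae_of_all _ fun ω => abs_rampAbove_le_one α (φ ω)) (R f)
  have hf_mul : ⇑(ι 0) =ᵐ[μ] fun ω => rampAbove α (φ ω) * ι f ω := by
    filter_upwards [coeFn_map_zero ι, hf] with ω hzero hfω
    rcases le_or_gt (φ ω) α with hle | hlt
    · rw [hzero, rampAbove_eq_zero hle, zero_mul, Pi.zero_apply]
    · rw [hzero, hfω hlt, mul_zero, Pi.zero_apply]
  have hw_zero : w = 0 := by
    simpa using eq_apply_of_commute_of_coeFn_ae_eq_mul ι (fun f g => (hι_mono f g).2) hι_abs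
      hMφ hφ_bdd hcomm (continuous_rampAbove α) hf_mul hw
  filter_upwards [hw, hw_zero ▸ coeFn_map_zero ι] with ω hwω hzero hlt
  rw [hzero, Pi.zero_apply, eq_comm, mul_eq_zero] at hwω
  exact hwω.resolve_left (rampAbove_pos hlt).ne'

/-- If `X` is a Banach function space on `(Ω, Σ, μ)` (realized by a linear
lattice embedding `ι` of `X` into the a.e.-equivalence classes of measurable functions,
with the ideal property), `M_φ` is the multiplication operator by an essentially bounded
measurable `φ`, and `R` is a bounded operator commuting with `M_φ`, then `R` leaves
invariant the band of functions supported in `E^α = {ω : φ ω ≤ α}`. -/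
theorem multiplication_commutant_leaves_sublevel_band_invariant
    {Ω : Type*} [MeasurableSpace Ω] {μ : Measure Ω}
    {X : Type*} [NormedAddCommGroup X] [Lattice X] [HasSolidNorm X] [IsOrderedAddMonoid X] [NormedSpace ℝ X] [CompleteSpace X]
    (ι : X →ₗ[ℝ] (Ω →ₘ[μ] ℝ)) (hι_inj : Function.Injective ι)
    (hι_mono : ∀ f g : X, f ≤ g ↔ ∀ᵐ ω ∂μ, (ι f : Ω → ℝ) ω ≤ (ι g : Ω → ℝ) ω)
    (hι_abs : ∀ f : X, (ι |f| : Ω → ℝ) =ᵐ[μ] fun ω => |(ι f : Ω → ℝ) ω|)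
    (hideal : ∀ (f : X) (g : Ω →ₘ[μ] ℝ),
      (∀ᵐ ω ∂μ, |(g : Ω → ℝ) ω| ≤ |(ι f : Ω → ℝ) ω|) → ∃ h : X, ι h = g)
    (φ : Ω → ℝ) (hφ_meas : Measurable φ) (hφ_bdd : ∃ C : ℝ, ∀ ω, |φ ω| ≤ C)
    (Mφ : X →L[ℝ] X)
    (hMφ : ∀ f : X, (ι (Mφ f) : Ω → ℝ) =ᵐ[μ] fun ω => φ ω * (ι f : Ω → ℝ) ω)
    (R : X →L[ℝ] X) (hcomm : R.comp Mφ = Mφ.comp R)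
    (α : ℝ) (f : X)
    (hf : ∀ᵐ ω ∂μ, α < φ ω → (ι f : Ω → ℝ) ω = 0) :
    ∀ᵐ ω ∂μ, α < φ ω → (ι (R f) : Ω → ℝ) ω = 0 :=
  multiplication_commutant_leaves_sublevel_band_invariant_general ι hι_mono hι_abs hideal φ hφ_meas
    hφ_bdd Mφ hMφ R hcomm α f hf
end

section
/- Let X be a Banach function space on (Ω,Σ,μ), φ ∈ L∞(μ), and let R : X → X be a bounded operator commuting with M_φ. Then for all real α ≤ β, R leaves invariant the set E_α^β = {ω ∈ Ω : α ≤ φ(ω) ≤ β}, in the sense that if f ∈ X vanishes a.e. outside E_α^β, then so does Rf. -/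
/-!
Shift `φ` by the midpoint `c` of `[α, β]` and set `r = (β - α) / 2`, so that `E_α^β = {|φ - c| ≤ r}`
and `T = M_φ - c` is multiplication by `φ - c`, which still commutes with `R`. If `f` lives on
`{|φ - c| ≤ r}` then `‖Tⁿ f‖ ≤ rⁿ ‖f‖`. On the other hand, by the ideal property the part `h` of `R f`
living on `{|φ - c| ≥ s}`, `s > r`, belongs to `X`, and `sⁿ ‖h‖ ≤ ‖Tⁿ R f‖ = ‖R Tⁿ f‖ ≤ ‖R‖ rⁿ ‖f‖`.
Letting `n → ∞` forces `h = 0`.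
-/

open MeasureTheory Filter

lemma le_zero_of_forall_pow_mul_le {r s a C : ℝ} (hr : 0 ≤ r) (hrs : r < s)
    (h : ∀ n : ℕ, s ^ n * a ≤ C * r ^ n) : a ≤ 0 := by
  have hs : 0 < s := hr.trans_lt hrs
  have hbound : ∀ n : ℕ, a ≤ C * (r / s) ^ n := fun n => by
    rw [div_pow, ← mul_div_assoc, le_div_iff₀ (pow_pos hs n), mul_comm a]
    exact h n
  have hlim : Tendsto (fun n : ℕ => C * (r / s) ^ n) atTop (nhds 0) := by
    simpa using (tendsto_pow_atTop_nhds_zero_of_lt_one (div_nonneg hr hs.le)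
      ((div_lt_one hs).2 hrs)).const_mul C
  exact ge_of_tendsto hlim (Eventually.of_forall hbound)

section BanachFunctionSpace

variable {Ω : Type*} [MeasurableSpace Ω] {μ : Measure Ω}
  {X : Type*} [NormedAddCommGroup X] [NormedSpace ℝ X] (ι : X →ₗ[ℝ] (Ω →ₘ[μ] ℝ))

lemma coeFn_smul_apply_ae (c : ℝ) (f : X) :
    (ι (c • f) : Ω → ℝ) =ᵐ[μ] fun ω => c * (ι f : Ω → ℝ) ω := by
  rw [map_smul]
  exact AEEqFun.coeFn_smul c (ι f)

def IsMulOperator (ψ : Ω → ℝ) (M : X →L[ℝ] X) : Prop :=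
  ∀ f : X, (ι (M f) : Ω → ℝ) =ᵐ[μ] fun ω => ψ ω * (ι f : Ω → ℝ) ω

namespace IsMulOperator

variable {ι} {ψ : Ω → ℝ} {M : X →L[ℝ] X}

lemma sub_smul_one (hM : IsMulOperator ι ψ M) (c : ℝ) :
    IsMulOperator ι (fun ω => ψ ω - c) (M - c • 1) := fun f => by
  have hsub : ι ((M - c • 1) f) = ι (M f) - c • ι f := by simp
  rw [hsub]
  filter_upwards [AEEqFun.coeFn_sub (ι (M f)) (c • ι f), hM f, AEEqFun.coeFn_smul c (ι f)]
    with ω h₁ h₂ h₃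
  rw [h₁, Pi.sub_apply, h₂, h₃, Pi.smul_apply, smul_eq_mul]
  ring

lemma pow (hM : IsMulOperator ι ψ M) (n : ℕ) :
    IsMulOperator ι (fun ω => ψ ω ^ n) (M ^ n) := by
  induction n with
  | zero => intro f; simp
  | succ n ih =>
    intro f
    rw [pow_succ, mul_apply_eq_comp]
    filter_upwards [ih (M f), hM f] with ω h₁ h₂
    rw [h₁, h₂]
    ring

end IsMulOperator

variable [Lattice X] [HasSolidNorm X]

lemma norm_le_norm_of_ae_abs_le
    (hι_mono : ∀ f g : X, f ≤ g ↔ ∀ᵐ ω ∂μ, (ι f : Ω → ℝ) ω ≤ (ι g : Ω → ℝ) ω)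
    (hι_abs : ∀ f : X, (ι |f| : Ω → ℝ) =ᵐ[μ] fun ω => |(ι f : Ω → ℝ) ω|) {f g : X}
    (h : ∀ᵐ ω ∂μ, |(ι g : Ω → ℝ) ω| ≤ |(ι f : Ω → ℝ) ω|) : ‖g‖ ≤ ‖f‖ := by
  refine norm_le_norm_of_abs_le_abs ((hι_mono _ _).2 ?_)
  filter_upwards [h, hι_abs g, hι_abs f] with ω hω hg hf
  rwa [hg, hf]

namespace IsMulOperator

variable {ι} {ψ : Ω → ℝ} {M : X →L[ℝ] X}
  (hι_mono : ∀ f g : X, f ≤ g ↔ ∀ᵐ ω ∂μ, (ι f : Ω → ℝ) ω ≤ (ι g : Ω → ℝ) ω)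
  (hι_abs : ∀ f : X, (ι |f| : Ω → ℝ) =ᵐ[μ] fun ω => |(ι f : Ω → ℝ) ω|)
include hι_mono hι_abs

lemma norm_pow_apply_le (hM : IsMulOperator ι ψ M) {r : ℝ} (hr : 0 ≤ r) {f : X}
    (hf : ∀ᵐ ω ∂μ, r < |ψ ω| → (ι f : Ω → ℝ) ω = 0) (n : ℕ) :
    ‖(M ^ n) f‖ ≤ r ^ n * ‖f‖ := by
  have hle : ‖(M ^ n) f‖ ≤ ‖r ^ n • f‖ := by
    refine norm_le_norm_of_ae_abs_le ι hι_mono hι_abs ?_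
    filter_upwards [hM.pow n f, coeFn_smul_apply_ae ι (r ^ n) f, hf] with ω h₁ h₂ hω
    rw [h₁, h₂, abs_mul, abs_mul, abs_pow, abs_pow, abs_of_nonneg hr]
    by_cases hψ : |ψ ω| ≤ r
    · gcongr
    · simp [hω (not_le.1 hψ)]
  rwa [norm_smul, Real.norm_of_nonneg (pow_nonneg hr n)] at hle

lemma pow_mul_norm_le_norm_pow_apply (hM : IsMulOperator ι ψ M) {s : ℝ} (hs : 0 ≤ s)
    {g h : X} (hhg : ∀ᵐ ω ∂μ, |(ι h : Ω → ℝ) ω| ≤ |(ι g : Ω → ℝ) ω|)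
    (hh : ∀ᵐ ω ∂μ, |ψ ω| < s → (ι h : Ω → ℝ) ω = 0) (n : ℕ) :
    s ^ n * ‖h‖ ≤ ‖(M ^ n) g‖ := by
  have hle : ‖s ^ n • h‖ ≤ ‖(M ^ n) g‖ := by
    refine norm_le_norm_of_ae_abs_le ι hι_mono hι_abs ?_
    filter_upwards [hM.pow n g, coeFn_smul_apply_ae ι (s ^ n) h, hhg, hh] with ω h₁ h₂ hω hψ
    rw [h₁, h₂, abs_mul, abs_mul, abs_pow, abs_pow, abs_of_nonneg hs]
    by_cases hsψ : s ≤ |ψ ω|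
    · gcongr
    · rw [hψ (not_le.1 hsψ), abs_zero, mul_zero]
      positivity
  rwa [norm_smul, Real.norm_of_nonneg (pow_nonneg hs n)] at hle

variable (hideal : ∀ (f : X) (g : Ω →ₘ[μ] ℝ),
  (∀ᵐ ω ∂μ, |(g : Ω → ℝ) ω| ≤ |(ι f : Ω → ℝ) ω|) → ∃ h : X, ι h = g)
include hideal

lemma ae_eq_zero_of_le_abs_of_commute (hψ : Measurable ψ) (hM : IsMulOperator ι ψ M)
    {R : X →L[ℝ] X} (hR : Commute R M) {r s : ℝ} (hr : 0 ≤ r) (hrs : r < s) {f : X}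
    (hf : ∀ᵐ ω ∂μ, r < |ψ ω| → (ι f : Ω → ℝ) ω = 0) :
    ∀ᵐ ω ∂μ, s ≤ |ψ ω| → (ι (R f) : Ω → ℝ) ω = 0 := by
  set A : Set Ω := {ω | s ≤ |ψ ω|}
  have hA : MeasurableSet A := measurableSet_le measurable_const hψ.abs
  have hmeas := (ι (R f)).aestronglyMeasurable.indicator hA
  obtain ⟨h, hh⟩ := hideal (R f) (AEEqFun.mk _ hmeas) <| by
    filter_upwards [AEEqFun.coeFn_mk _ hmeas] with ω hω
    rw [hω]
    by_cases hωA : ω ∈ A <;> simp [hωA]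
  have hh_ae : (ι h : Ω → ℝ) =ᵐ[μ] A.indicator (ι (R f)) := hh ▸ AEEqFun.coeFn_mk _ hmeas
  have hcomb : ∀ n : ℕ, s ^ n * ‖h‖ ≤ ‖R‖ * ‖f‖ * r ^ n := fun n =>
    calc s ^ n * ‖h‖ ≤ ‖(M ^ n) (R f)‖ := by
          refine hM.pow_mul_norm_le_norm_pow_apply hι_mono hι_abs (hr.trans hrs.le) ?_ ?_ n
          · filter_upwards [hh_ae] with ω hω
            by_cases hωA : ω ∈ A <;> simp [hω, hωA]
          · filter_upwards [hh_ae] with ω hω hψω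
            simp [hω, A, not_le.2 hψω]
      _ = ‖R ((M ^ n) f)‖ := congrArg (fun T : X →L[ℝ] X => ‖T f‖) (hR.pow_right n).eq.symm
      _ ≤ ‖R‖ * (r ^ n * ‖f‖) :=
          R.le_opNorm_of_le (hM.norm_pow_apply_le hι_mono hι_abs hr hf n)
      _ = ‖R‖ * ‖f‖ * r ^ n := by ring
  have h0 : h = 0 := norm_le_zero_iff.1 (le_zero_of_forall_pow_mul_le hr hrs hcomb)
  have hind : A.indicator (ι (R f)) =ᵐ[μ] 0 :=
    hh_ae.symm.trans (by rw [h0, map_zero]; exact AEEqFun.coeFn_zero)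
  filter_upwards [hind] with ω hω hωA
  simpa [Set.indicator_of_mem (show ω ∈ A from hωA)] using hω

lemma ae_eq_zero_of_lt_abs_of_commute (hψ : Measurable ψ) (hM : IsMulOperator ι ψ M)
    {R : X →L[ℝ] X} (hR : Commute R M) {r : ℝ} (hr : 0 ≤ r) {f : X}
    (hf : ∀ᵐ ω ∂μ, r < |ψ ω| → (ι f : Ω → ℝ) ω = 0) :
    ∀ᵐ ω ∂μ, r < |ψ ω| → (ι (R f) : Ω → ℝ) ω = 0 := by
  have hk : ∀ k : ℕ, ∀ᵐ ω ∂μ, r + 1 / (k + 1) ≤ |ψ ω| → (ι (R f) : Ω → ℝ) ω = 0 := fun k =>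
    hM.ae_eq_zero_of_le_abs_of_commute hι_mono hι_abs hideal hψ hR hr
      (lt_add_of_pos_right r Nat.one_div_pos_of_nat) hf
  filter_upwards [ae_all_iff.2 hk] with ω hω hrψ
  obtain ⟨k, hk⟩ := exists_nat_one_div_lt (sub_pos.2 hrψ)
  exact hω k (by linarith)

end IsMulOperator

end BanachFunctionSpace

theorem multiplication_commutant_leaves_level_band_invariant_general
    {Ω : Type*} [MeasurableSpace Ω] {μ : Measure Ω}
    {X : Type*} [NormedAddCommGroup X] [Lattice X] [HasSolidNorm X] [NormedSpace ℝ X]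
    (ι : X →ₗ[ℝ] (Ω →ₘ[μ] ℝ))
    (hι_mono : ∀ f g : X, f ≤ g ↔ ∀ᵐ ω ∂μ, (ι f : Ω → ℝ) ω ≤ (ι g : Ω → ℝ) ω)
    (hι_abs : ∀ f : X, (ι |f| : Ω → ℝ) =ᵐ[μ] fun ω => |(ι f : Ω → ℝ) ω|)
    (hideal : ∀ (f : X) (g : Ω →ₘ[μ] ℝ),
      (∀ᵐ ω ∂μ, |(g : Ω → ℝ) ω| ≤ |(ι f : Ω → ℝ) ω|) → ∃ h : X, ι h = g)
    (φ : Ω → ℝ) (hφ_meas : Measurable φ)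
    (Mφ : X →L[ℝ] X)
    (hMφ : ∀ f : X, (ι (Mφ f) : Ω → ℝ) =ᵐ[μ] fun ω => φ ω * (ι f : Ω → ℝ) ω)
    (R : X →L[ℝ] X) (hcomm : R.comp Mφ = Mφ.comp R)
    (α β : ℝ) (hαβ : α ≤ β) (f : X)
    (hf : ∀ᵐ ω ∂μ, ¬(α ≤ φ ω ∧ φ ω ≤ β) → (ι f : Ω → ℝ) ω = 0) :
    ∀ᵐ ω ∂μ, ¬(α ≤ φ ω ∧ φ ω ≤ β) → (ι (R f) : Ω → ℝ) ω = 0 := by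
  set c := (α + β) / 2
  set r := (β - α) / 2
  have hband : ∀ x : ℝ, α ≤ x ∧ x ≤ β ↔ |x - c| ≤ r := fun x => by
    simpa [Real.dist_eq] using Set.ext_iff.1 (Real.Icc_eq_closedBall α β) x
  have hR : Commute R (Mφ - c • 1) :=
    (show Commute R Mφ from hcomm).sub_right ((Commute.one_right R).smul_right c)
  have hRf := (show IsMulOperator ι φ Mφ from hMφ).sub_smul_one c
    |>.ae_eq_zero_of_lt_abs_of_commute hι_mono hι_abs hideal (hφ_meas.sub_const c) hR
      (div_nonneg (sub_nonneg.2 hαβ) zero_le_two) <| by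
        filter_upwards [hf] with ω hω hrω
        exact hω ((hband _).not.2 (not_le.2 hrω))
  filter_upwards [hRf] with ω hω hωE
  exact hω (not_le.1 ((hband _).not.1 hωE))

/-- every bounded operator commuting with the multiplication operator `M_φ`
on a Banach function space leaves invariant each set `E_α^β = {ω : α ≤ φ ω ≤ β}`:
if `f` vanishes a.e. outside `E_α^β`, then so does `R f`. -/
theorem multiplication_commutant_leaves_level_band_invariant
    {Ω : Type*} [MeasurableSpace Ω] {μ : Measure Ω}
    {X : Type*} [NormedAddCommGroup X] [Lattice X] [HasSolidNorm X] [IsOrderedAddMonoid X] [NormedSpace ℝ X] [CompleteSpace X]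
    (ι : X →ₗ[ℝ] (Ω →ₘ[μ] ℝ)) (hι_inj : Function.Injective ι)
    (hι_mono : ∀ f g : X, f ≤ g ↔ ∀ᵐ ω ∂μ, (ι f : Ω → ℝ) ω ≤ (ι g : Ω → ℝ) ω)
    (hι_abs : ∀ f : X, (ι |f| : Ω → ℝ) =ᵐ[μ] fun ω => |(ι f : Ω → ℝ) ω|)
    (hideal : ∀ (f : X) (g : Ω →ₘ[μ] ℝ),
      (∀ᵐ ω ∂μ, |(g : Ω → ℝ) ω| ≤ |(ι f : Ω → ℝ) ω|) → ∃ h : X, ι h = g)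
    (φ : Ω → ℝ) (hφ_meas : Measurable φ) (hφ_bdd : ∃ C : ℝ, ∀ ω, |φ ω| ≤ C)
    (Mφ : X →L[ℝ] X)
    (hMφ : ∀ f : X, (ι (Mφ f) : Ω → ℝ) =ᵐ[μ] fun ω => φ ω * (ι f : Ω → ℝ) ω)
    (R : X →L[ℝ] X) (hcomm : R.comp Mφ = Mφ.comp R)
    (α β : ℝ) (hαβ : α ≤ β) (f : X)
    (hf : ∀ᵐ ω ∂μ, ¬(α ≤ φ ω ∧ φ ω ≤ β) → (ι f : Ω → ℝ) ω = 0) :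
    ∀ᵐ ω ∂μ, ¬(α ≤ φ ω ∧ φ ω ≤ β) → (ι (R f) : Ω → ℝ) ω = 0 :=
  multiplication_commutant_leaves_level_band_invariant_general ι hι_mono hι_abs hideal φ hφ_meas Mφ
    hMφ R hcomm α β hαβ f hf
end

section
/- Let X be a Banach function space on (Ω,Σ,μ) and φ ∈ L∞(μ), φ ≥ 0. If R : X → X is a bounded operator with RM_φ = M_φR, x ∈ X is supported in E^1 = {ω : φ(ω) ≤ 1}, and γ > 1, then the set B = {ω ∈ Ω : Rx(ω) ≠ 0 and φ(ω) > γ} has measure zero. -/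
/-!
Since `R` commutes with `M_φ`, `‖M_φⁿ (R x)‖ = ‖R (M_φⁿ x)‖ ≤ ‖R‖ ‖x‖`, because `|φⁿ x| ≤ |x|`
on the support `E^1` of `x`. The lattice element `(M_φ |R x| - γ |R x|)⁺`, whose function is
`((φ - γ) |R x|)⁺`, is positive exactly on `B` and dominated there by `γ⁻ⁿ φⁿ⁺¹ |R x|`. By
solidity of the norm it has norm at most `γ⁻ⁿ ‖R‖ ‖x‖` for every `n`, so it vanishes, and with
it `μ B`.
-/

open MeasureTheory

theorem eq_zero_of_forall_pow_mul_le {γ t C : ℝ} (hγ : 1 < γ) (ht : 0 ≤ t)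
    (h : ∀ n : ℕ, γ ^ n * t ≤ C) : t = 0 := by
  refine ht.antisymm' (not_lt.1 fun ht_pos => ?_)
  obtain ⟨n, hn⟩ := pow_unbounded_of_one_lt (C / t) hγ
  exact (h n).not_gt ((div_lt_iff₀ ht_pos).1 hn)

theorem pow_mul_posPart_sub_mul_le {γ s t : ℝ} (hγ : 0 ≤ γ) (hs : 0 ≤ s) (ht : 0 ≤ t) (n : ℕ) :
    γ ^ n * ((s - γ) * t)⁺ ≤ s ^ (n + 1) * t := by
  rcases le_or_gt s γ with hsγ | hγs
  · rw [posPart_eq_zero.2 (mul_nonpos_of_nonpos_of_nonneg (sub_nonpos.2 hsγ) ht), mul_zero]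
    positivity
  · rw [posPart_eq_self.2 (mul_nonneg (sub_nonneg.2 hγs.le) ht), pow_succ, mul_assoc]
    gcongr
    linarith

section FunctionLattice

variable {Ω : Type*} [MeasurableSpace Ω] {μ : Measure Ω}
  {X : Type*} [NormedAddCommGroup X] [NormedSpace ℝ X]

def IsMultiplicationOperator (ι : X →ₗ[ℝ] (Ω →ₘ[μ] ℝ)) (φ : Ω → ℝ) (T : X →L[ℝ] X) : Prop :=
  ∀ f : X, (ι (T f) : Ω → ℝ) =ᵐ[μ] fun ω => φ ω * (ι f : Ω → ℝ) ω

theorem IsMultiplicationOperator.coeFn_pow_apply {ι : X →ₗ[ℝ] (Ω →ₘ[μ] ℝ)} {φ : Ω → ℝ}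
    {T : X →L[ℝ] X} (hT : IsMultiplicationOperator ι φ T) (n : ℕ) (f : X) :
    (ι ((T ^ n) f) : Ω → ℝ) =ᵐ[μ] fun ω => φ ω ^ n * (ι f : Ω → ℝ) ω := by
  induction n with
  | zero => simp
  | succ n ih =>
    rw [pow_succ']
    exact (hT ((T ^ n) f)).trans (ih.mono fun ω h => by simp only [h, pow_succ', mul_assoc])

variable [Lattice X]

structure IsLatticeEmbedding (ι : X →ₗ[ℝ] (Ω →ₘ[μ] ℝ)) : Prop where
  le_iff_ae_le : ∀ f g : X, f ≤ g ↔ ∀ᵐ ω ∂μ, (ι f : Ω → ℝ) ω ≤ (ι g : Ω → ℝ) ω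
  coeFn_abs : ∀ f : X, (ι |f| : Ω → ℝ) =ᵐ[μ] fun ω => |(ι f : Ω → ℝ) ω|

variable {ι : X →ₗ[ℝ] (Ω →ₘ[μ] ℝ)}

namespace IsLatticeEmbedding

theorem norm_le_norm_of_ae_abs_le [HasSolidNorm X] (hι : IsLatticeEmbedding ι) {a b : X}
    (h : ∀ᵐ ω ∂μ, |(ι a : Ω → ℝ) ω| ≤ |(ι b : Ω → ℝ) ω|) : ‖a‖ ≤ ‖b‖ := by
  refine norm_le_norm_of_abs_le_abs ((hι.le_iff_ae_le _ _).2 ?_)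
  filter_upwards [hι.coeFn_abs a, hι.coeFn_abs b, h] with ω ha hb hab
  rwa [ha, hb]

theorem coeFn_posPart [IsOrderedAddMonoid X] (hι : IsLatticeEmbedding ι) (a : X) :
    (ι a⁺ : Ω → ℝ) =ᵐ[μ] fun ω => ((ι a : Ω → ℝ) ω)⁺ := by
  have h : ι a⁺ + ι a⁺ = ι a + ι |a| := by
    rw [← map_add, ← map_add, ← two_nsmul, add_abs_eq_two_nsmul_posPart]
  filter_upwards [AEEqFun.coeFn_add (ι a⁺) (ι a⁺), AEEqFun.coeFn_add (ι a) (ι |a|),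
    hι.coeFn_abs a] with ω h₁ h₂ habs
  have hω := congrFun (congrArg (⇑) h) ω
  have hpos := add_abs_eq_two_nsmul_posPart ((ι a : Ω → ℝ) ω)
  rw [h₁, h₂, Pi.add_apply, Pi.add_apply, habs] at hω
  rw [two_nsmul] at hpos
  linarith

end IsLatticeEmbedding

namespace IsMultiplicationOperator

variable {φ : Ω → ℝ} {T : X →L[ℝ] X}

theorem norm_pow_apply_le [HasSolidNorm X] (hι : IsLatticeEmbedding ι)
    (hT : IsMultiplicationOperator ι φ T) (hφ : ∀ ω, 0 ≤ φ ω) {x : X}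
    (hx : ∀ᵐ ω ∂μ, 1 < φ ω → (ι x : Ω → ℝ) ω = 0) (n : ℕ) : ‖(T ^ n) x‖ ≤ ‖x‖ := by
  refine hι.norm_le_norm_of_ae_abs_le ?_
  filter_upwards [hT.coeFn_pow_apply n x, hx] with ω hpow hxω
  rw [hpow, abs_mul]
  rcases le_or_gt (φ ω) 1 with hφ1 | hφ1
  · rw [abs_of_nonneg (pow_nonneg (hφ ω) n)]
    exact mul_le_of_le_one_left (abs_nonneg _) (pow_le_one₀ (hφ ω) hφ1)
  · simp [hxω hφ1]

variable [IsOrderedAddMonoid X]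

theorem coeFn_posPart_sub_smul_abs (hι : IsLatticeEmbedding ι) (hT : IsMultiplicationOperator ι φ T)
    (γ : ℝ) (y : X) :
    (ι (T |y| - γ • |y|)⁺ : Ω → ℝ) =ᵐ[μ] fun ω => ((φ ω - γ) * |(ι y : Ω → ℝ) ω|)⁺ := by
  have hsub : (ι (T |y| - γ • |y|) : Ω → ℝ) =ᵐ[μ] fun ω => (φ ω - γ) * |(ι y : Ω → ℝ) ω| := by
    rw [map_sub, map_smul]
    filter_upwards [AEEqFun.coeFn_sub (ι (T |y|)) (γ • ι |y|), AEEqFun.coeFn_smul γ (ι |y|),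
      hT |y|, hι.coeFn_abs y] with ω hsub hsmul hTy habs
    rw [hsub, Pi.sub_apply, hsmul, Pi.smul_apply, hTy, habs, smul_eq_mul, sub_mul]
  filter_upwards [hι.coeFn_posPart (T |y| - γ • |y|), hsub] with ω hpos hsubω
  rw [hpos, hsubω]

theorem pow_mul_norm_posPart_le [HasSolidNorm X] (hι : IsLatticeEmbedding ι)
    (hT : IsMultiplicationOperator ι φ T) (hφ : ∀ ω, 0 ≤ φ ω) {γ : ℝ} (hγ : 0 ≤ γ) (y : X)
    (n : ℕ) : γ ^ n * ‖(T |y| - γ • |y|)⁺‖ ≤ ‖(T ^ (n + 1)) y‖ := by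
  rw [← Real.norm_of_nonneg (pow_nonneg hγ n), ← norm_smul]
  refine hι.norm_le_norm_of_ae_abs_le ?_
  rw [map_smul]
  filter_upwards [AEEqFun.coeFn_smul (γ ^ n) (ι (T |y| - γ • |y|)⁺),
    hT.coeFn_posPart_sub_smul_abs hι γ y, hT.coeFn_pow_apply (n + 1) y] with ω hsmul hpos hpow
  rw [hsmul, Pi.smul_apply, hpos, hpow, smul_eq_mul, abs_mul, abs_mul,
    abs_of_nonneg (pow_nonneg hγ n), abs_of_nonneg (posPart_nonneg _),
    abs_of_nonneg (pow_nonneg (hφ ω) _)]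
  exact pow_mul_posPart_sub_mul_le hγ (hφ ω) (abs_nonneg _) n

theorem measure_setOf_ne_zero_and_lt_eq_zero (hι : IsLatticeEmbedding ι)
    (hT : IsMultiplicationOperator ι φ T) {γ : ℝ} {y : X} (hy : (T |y| - γ • |y|)⁺ = 0) :
    μ {ω | (ι y : Ω → ℝ) ω ≠ 0 ∧ γ < φ ω} = 0 := by
  have hpos := hT.coeFn_posPart_sub_smul_abs hι γ y
  rw [hy, map_zero] at hpos
  refine measure_mono_null (fun ω hω => ?_) (ae_iff.1 (hpos.symm.trans AEEqFun.coeFn_zero))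
  exact (posPart_pos (mul_pos (sub_pos.2 hω.2) (abs_pos.2 hω.1))).ne'

end IsMultiplicationOperator

end FunctionLattice

theorem commutant_support_escape_null_general
    {Ω : Type*} [MeasurableSpace Ω] {μ : Measure Ω}
    {X : Type*} [NormedAddCommGroup X] [Lattice X] [IsOrderedAddMonoid X] [HasSolidNorm X] [NormedSpace ℝ X]
    (ι : X →ₗ[ℝ] (Ω →ₘ[μ] ℝ))
    (hι_mono : ∀ f g : X, f ≤ g ↔ ∀ᵐ ω ∂μ, (ι f : Ω → ℝ) ω ≤ (ι g : Ω → ℝ) ω)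
    (hι_abs : ∀ f : X, (ι |f| : Ω → ℝ) =ᵐ[μ] fun ω => |(ι f : Ω → ℝ) ω|)
    (φ : Ω → ℝ)
    (Mφ : X →L[ℝ] X)
    (hMφ : ∀ f : X, (ι (Mφ f) : Ω → ℝ) =ᵐ[μ] fun ω => φ ω * (ι f : Ω → ℝ) ω)
    (hφ_pos : ∀ ω, 0 ≤ φ ω)
    (R : X →L[ℝ] X) (hcomm : R.comp Mφ = Mφ.comp R)
    (x : X) (hx : ∀ᵐ ω ∂μ, (1 : ℝ) < φ ω → (ι x : Ω → ℝ) ω = 0)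
    (γ : ℝ) (hγ : 1 < γ) :
    μ {ω | (ι (R x) : Ω → ℝ) ω ≠ 0 ∧ γ < φ ω} = 0 := by
  have hι : IsLatticeEmbedding ι := ⟨hι_mono, hι_abs⟩
  have hT : IsMultiplicationOperator ι φ Mφ := hMφ
  have hcomm_pow (n : ℕ) : R ((Mφ ^ n) x) = (Mφ ^ n) (R x) :=
    DFunLike.congr_fun ((show Commute R Mφ from hcomm).pow_right n).eq x
  have hbound (n : ℕ) : γ ^ n * ‖(Mφ |R x| - γ • |R x|)⁺‖ ≤ ‖R‖ * ‖x‖ :=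
    calc γ ^ n * ‖(Mφ |R x| - γ • |R x|)⁺‖
        ≤ ‖(Mφ ^ (n + 1)) (R x)‖ := hT.pow_mul_norm_posPart_le hι hφ_pos (by linarith) _ n
      _ = ‖R ((Mφ ^ (n + 1)) x)‖ := by rw [hcomm_pow]
      _ ≤ ‖R‖ * ‖(Mφ ^ (n + 1)) x‖ := R.le_opNorm _
      _ ≤ ‖R‖ * ‖x‖ := by gcongr; exact hT.norm_pow_apply_le hι hφ_pos hx _
  exact hT.measure_setOf_ne_zero_and_lt_eq_zero hι
    (norm_eq_zero.1 (eq_zero_of_forall_pow_mul_le hγ (norm_nonneg _) hbound))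

/-- if `R` commutes with `M_φ` (`φ ≥ 0` essentially bounded), `x` is
supported in `E^1 = {ω : φ ω ≤ 1}` and `γ > 1`, then
`B = {ω : (Rx)(ω) ≠ 0 and φ(ω) > γ}` is null. -/
theorem commutant_support_escape_null
    {Ω : Type*} [MeasurableSpace Ω] {μ : Measure Ω}
    {X : Type*} [NormedAddCommGroup X] [Lattice X] [IsOrderedAddMonoid X] [HasSolidNorm X] [NormedSpace ℝ X] [CompleteSpace X]
    (ι : X →ₗ[ℝ] (Ω →ₘ[μ] ℝ)) (hι_inj : Function.Injective ι)
    (hι_mono : ∀ f g : X, f ≤ g ↔ ∀ᵐ ω ∂μ, (ι f : Ω → ℝ) ω ≤ (ι g : Ω → ℝ) ω)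
    (hι_abs : ∀ f : X, (ι |f| : Ω → ℝ) =ᵐ[μ] fun ω => |(ι f : Ω → ℝ) ω|)
    (hideal : ∀ (f : X) (g : Ω →ₘ[μ] ℝ),
      (∀ᵐ ω ∂μ, |(g : Ω → ℝ) ω| ≤ |(ι f : Ω → ℝ) ω|) → ∃ h : X, ι h = g)
    (φ : Ω → ℝ) (hφ_meas : Measurable φ) (hφ_bdd : ∃ C : ℝ, ∀ ω, |φ ω| ≤ C)
    (Mφ : X →L[ℝ] X)
    (hMφ : ∀ f : X, (ι (Mφ f) : Ω → ℝ) =ᵐ[μ] fun ω => φ ω * (ι f : Ω → ℝ) ω)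
    (hφ_pos : ∀ ω, 0 ≤ φ ω)
    (R : X →L[ℝ] X) (hcomm : R.comp Mφ = Mφ.comp R)
    (x : X) (hx : ∀ᵐ ω ∂μ, (1 : ℝ) < φ ω → (ι x : Ω → ℝ) ω = 0)
    (γ : ℝ) (hγ : 1 < γ) :
    μ {ω | (ι (R x) : Ω → ℝ) ω ≠ 0 ∧ γ < φ ω} = 0 :=
  commutant_support_escape_null_general ι hι_mono hι_abs φ Mφ hMφ hφ_pos R hcomm x hx γ hγ
end

section
/- Let Y be a Banach lattice, K : Y → Y a positive compact operator, and A : Y → Y an operator dominated by K (i.e., |Ax| ≤ K|x| for all x). Then for any norm bounded sequence (e_n) in Y, there exist a subsequence (e_{n_k}) and an element u ∈ Y⁺ such that |A e_{n_k}| ≤ u for all k. -/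
/-!
By compactness, `K |e n|` has a subsequence converging to some `y`, and a further subsequence
converges so fast that `∑ₖ ‖K |e (n k)| - y‖` is finite. In a Banach lattice the series
`∑ₖ |K |e (n k)| - y|` then converges, and `u = |y| + ∑ₖ |K |e (n k)| - y|` dominates every
`K |e (n k)| ≥ |A (e (n k))|`.
-/

open Filter Topology

section CompactOperator

variable {𝕜₁ 𝕜₂ : Type*} [NontriviallyNormedField 𝕜₁] [SeminormedRing 𝕜₂] {σ₁₂ : 𝕜₁ →+* 𝕜₂}
  {M₁ M₂ : Type*} [SeminormedAddCommGroup M₁] [TopologicalSpace M₂] [AddCommMonoid M₂]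
  [NormedSpace 𝕜₁ M₁] [Module 𝕜₂ M₂] [ContinuousConstSMul 𝕜₂ M₂] [FirstCountableTopology M₂]

theorem IsCompactOperator.exists_strictMono_tendsto_of_norm_le {f : M₁ →ₛₗ[σ₁₂] M₂}
    (hf : IsCompactOperator f) {x : ℕ → M₁} {C : ℝ} (hx : ∀ n, ‖x n‖ ≤ C) :
    ∃ y, ∃ φ : ℕ → ℕ, StrictMono φ ∧ Tendsto (fun k ↦ f (x (φ k))) atTop (𝓝 y) := by
  obtain ⟨S, hS, hxS⟩ := hf.image_subset_compact_of_bounded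
    (isBounded_iff_forall_norm_le.2 ⟨C, Set.forall_mem_range.2 hx⟩)
  obtain ⟨y, -, φ, hφ, hy⟩ := hS.tendsto_subseq fun n ↦ hxS ⟨x n, Set.mem_range_self n, rfl⟩
  exact ⟨y, φ, hφ, hy⟩

end CompactOperator

theorem Filter.Tendsto.exists_strictMono_summable_norm_sub {E : Type*} [SeminormedAddCommGroup E]
    {x : ℕ → E} {y : E} (hx : Tendsto x atTop (𝓝 y)) :
    ∃ φ : ℕ → ℕ, StrictMono φ ∧ Summable fun k ↦ ‖x (φ k) - y‖ := by
  have hfast (k : ℕ) : ∀ᶠ m in atTop, ‖x m - y‖ < (1 / 2 : ℝ) ^ k :=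
    (tendsto_iff_norm_sub_tendsto_zero.1 hx).eventually_lt_const (by positivity)
  obtain ⟨φ, hφ, hφfast⟩ := extraction_forall_of_eventually hfast
  exact ⟨φ, hφ, .of_nonneg_of_le (fun _ ↦ norm_nonneg _) (fun k ↦ (hφfast k).le)
    summable_geometric_two⟩

section NormedLattice

variable {E : Type*} [NormedAddCommGroup E] [Lattice E] [HasSolidNorm E] [IsOrderedAddMonoid E]
  [CompleteSpace E]

theorem abs_le_abs_add_tsum_abs_sub {x : ℕ → E} {y : E} (hx : Summable fun k ↦ ‖x k - y‖)
    (k : ℕ) : |x k| ≤ |y| + ∑' j, |x j - y| := by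
  have hsum : Summable fun j ↦ |x j - y| := .of_norm (by simpa only [norm_abs_eq_norm] using hx)
  calc |x k| = |y + (x k - y)| := by rw [add_sub_cancel]
    _ ≤ |y| + |x k - y| := abs_add_le _ _
    _ ≤ |y| + ∑' j, |x j - y| := by
      gcongr
      exact hsum.le_tsum k fun j _ ↦ abs_nonneg _

theorem Filter.Tendsto.exists_strictMono_abs_le {x : ℕ → E} {y : E}
    (hx : Tendsto x atTop (𝓝 y)) :
    ∃ φ : ℕ → ℕ, StrictMono φ ∧ ∃ u : E, 0 ≤ u ∧ ∀ k, |x (φ k)| ≤ u := by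
  obtain ⟨φ, hφ, hsum⟩ := hx.exists_strictMono_summable_norm_sub
  exact ⟨φ, hφ, |y| + ∑' j, |x (φ j) - y|,
    add_nonneg (abs_nonneg y) (tsum_nonneg fun _ ↦ abs_nonneg _),
    abs_le_abs_add_tsum_abs_sub hsum⟩

end NormedLattice

theorem dominated_by_compact_order_bounded_subsequence_general
    {Y : Type*} [NormedAddCommGroup Y] [Lattice Y] [HasSolidNorm Y] [IsOrderedAddMonoid Y] [NormedSpace ℝ Y] [CompleteSpace Y]
    (K A : Y →L[ℝ] Y)
    (hK_compact : IsCompactOperator K)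
    (hdom : ∀ x : Y, |A x| ≤ K |x|)
    (e : ℕ → Y) (C : ℝ) (he : ∀ n, ‖e n‖ ≤ C) :
    ∃ n : ℕ → ℕ, StrictMono n ∧ ∃ u : Y, 0 ≤ u ∧ ∀ k, |A (e (n k))| ≤ u := by
  obtain ⟨y, φ, hφ, hKφ⟩ := hK_compact.exists_strictMono_tendsto_of_norm_le (f := K.toLinearMap)
    (x := fun n ↦ |e n|) fun n ↦ (norm_abs_eq_norm (e n)).trans_le (he n)
  obtain ⟨ψ, hψ, u, hu, hKu⟩ := hKφ.exists_strictMono_abs_le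
  exact ⟨φ ∘ ψ, hφ.comp hψ, u, hu, fun k ↦ (hdom _).trans ((le_abs_self _).trans (hKu k))⟩

/-- if `A` is dominated by a positive compact operator `K` on a Banach
lattice `Y`, then for every norm bounded sequence `(e_n)` the sequence `(A e_n)` has an
order bounded subsequence. -/
theorem dominated_by_compact_order_bounded_subsequence
    {Y : Type*} [NormedAddCommGroup Y] [Lattice Y] [HasSolidNorm Y] [IsOrderedAddMonoid Y] [NormedSpace ℝ Y] [CompleteSpace Y]
    (K A : Y →L[ℝ] Y) (hK_pos : ∀ x : Y, 0 ≤ x → 0 ≤ K x)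
    (hK_compact : IsCompactOperator K)
    (hdom : ∀ x : Y, |A x| ≤ K |x|)
    (e : ℕ → Y) (C : ℝ) (he : ∀ n, ‖e n‖ ≤ C) :
    ∃ n : ℕ → ℕ, StrictMono n ∧ ∃ u : Y, 0 ≤ u ∧ ∀ k, |A (e (n k))| ≤ u :=
  dominated_by_compact_order_bounded_subsequence_general K A hK_compact hdom e C he
end

section
/- Let Ω be a compact Hausdorff space, φ ∈ C(Ω), and let R : C(Ω) → C(Ω) be a bounded operator commuting with the multiplication operator M_φ. Then for each ω ∈ Ω, the regular Borel measure R*δ_ω is supported on the level set W_ω = φ⁻¹({φ(ω)}); that is, |R*δ_ω|(Ω \ W_ω) = 0. -/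
/-!
If `R` commutes with multiplication by `φ`, then `R ((φ - φ ω) h) ω = (φ ω - φ ω) (R h) ω = 0`,
so the continuous functional `g ↦ (R g) ω` vanishes on the ideal generated by `φ - φ ω`, hence
on its closure. In `C(Ω)` with `Ω` compact Hausdorff, the closure of an ideal consists of the
functions vanishing on its common zero set, which here is the level set `φ⁻¹ {φ ω}`.
-/

open ContinuousMap

theorem ContinuousLinearMap.apply_mul_of_comp_eq_comp {𝕜 A : Type*} [Semiring 𝕜] [Semiring A]
    [Module 𝕜 A] [TopologicalSpace A] {φ : A} {M R : A →L[𝕜] A} (hM : ∀ a, M a = φ * a)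
    (hcomm : R.comp M = M.comp R) (a : A) : R (φ * a) = φ * R a := by
  simpa only [comp_apply, hM] using congrArg (· a) hcomm

namespace ContinuousMap

variable {X 𝕜 : Type*} [TopologicalSpace X]

theorem mem_closure_span_singleton_of_forall_eq_zero [CompactSpace X] [T2Space X] [RCLike 𝕜]
    {ψ f : C(X, 𝕜)} (hf : ∀ x, ψ x = 0 → f x = 0) :
    f ∈ closure (Ideal.span {ψ} : Set C(X, 𝕜)) := by
  change f ∈ (Ideal.span {ψ}).closure
  rw [← idealOfSet_ofIdeal_eq_closure, mem_idealOfSet]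
  intro x hx
  refine hf x (not_not.mp fun hψx => hx ?_)
  exact mem_setOfIdeal.mpr ⟨ψ, Ideal.mem_span_singleton_self ψ, hψx⟩

variable [CommRing 𝕜] [TopologicalSpace 𝕜] [IsTopologicalRing 𝕜]

theorem apply_eq_zero_of_mem_span_sub_const {φ g : C(X, 𝕜)} {R : C(X, 𝕜) →L[𝕜] C(X, 𝕜)}
    (hR : ∀ h, R (φ * h) = φ * R h) {x : X} (hg : g ∈ Ideal.span {φ - const X (φ x)}) :
    R g x = 0 := by
  obtain ⟨h, rfl⟩ := Ideal.mem_span_singleton'.mp hg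
  have hsplit : h * (φ - const X (φ x)) = φ * h - φ x • h := by
    ext; simp [mul_sub, mul_comm]
  simp [hsplit, hR]

end ContinuousMap

/-- if `R` is a bounded operator on `C(Ω)` (`Ω` compact Hausdorff) commuting
with the multiplication operator `M_φ`, then for each `ω ∈ Ω` the regular Borel measure
`R*δ_ω` is supported on the level set `W_ω = φ⁻¹({φ ω})`; equivalently (by regularity),
`⟨R*δ_ω, f⟩ = (Rf)(ω) = 0` for every `f ∈ C(Ω)` vanishing on `W_ω`. -/
theorem adjoint_dirac_supported_on_level_set
    {Ω : Type*} [TopologicalSpace Ω] [CompactSpace Ω] [T2Space Ω]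
    (φ : C(Ω, ℝ))
    (Mφ : C(Ω, ℝ) →L[ℝ] C(Ω, ℝ)) (hMφ : ∀ f : C(Ω, ℝ), Mφ f = φ * f)
    (R : C(Ω, ℝ) →L[ℝ] C(Ω, ℝ)) (hcomm : R.comp Mφ = Mφ.comp R)
    (ω : Ω) (f : C(Ω, ℝ)) (hf : ∀ x, φ x = φ ω → f x = 0) :
    R f ω = 0 := by
  have hR := ContinuousLinearMap.apply_mul_of_comp_eq_comp hMφ hcomm
  have hf_mem : f ∈ closure (Ideal.span {φ - const Ω (φ ω)} : Set C(Ω, ℝ)) :=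
    mem_closure_span_singleton_of_forall_eq_zero fun x hx => hf x (sub_eq_zero.mp hx)
  have hclosed : IsClosed {g : C(Ω, ℝ) | R g ω = 0} :=
    isClosed_eq ((continuous_eval_const ω).comp R.continuous) continuous_const
  exact closure_minimal (fun g hg => apply_eq_zero_of_mem_span_sub_const hR hg) hclosed hf_mem
end

section
/- Let Ω be a compact Hausdorff space and M_φ a positive multiplication operator on C(Ω) (so 0 ≤ φ ∈ C(Ω)). If M_φ is compact-friendly, then φ has a flat, i.e., there exists a non-empty open set V ⊆ Ω on which φ is constant. -/
/-!
If `R` commutes with multiplication by `φ`, it commutes with multiplication by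
`w = 1 - (φ - φ ω₀)² / C`; for `C` large, `w ω₀ = 1` while the powers `wⁿ f` tend to `0` whenever
`f` vanishes near the level set `φ = φ ω₀`. Hence `R f ω₀`, and then `A f ω₀` since `|A f| ≤ R |f|`,
only depends on `f` near that level set. Choose `A x ω₀ ≠ 0`. If `φ` had no flat, it would take
arbitrarily many values `t₁, …, t_N` on a neighbourhood of `ω₀` on which `|A x|` stays large and on
which the functions `K g`, `‖g‖ ≤ ‖x‖`, vary little (a compact operator maps bounded sets to
equicontinuous ones). With bumps `bᵢ = 1` near `tᵢ` with disjoint supports, locality gives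
`|A x| ≤ K (bᵢ(φ) |x|)` where `φ = tᵢ`, hence `K (bᵢ(φ) |x|) ω₀` is bounded below uniformly in `i`,
while `∑ᵢ K (bᵢ(φ) |x|) ≤ K |x|` by positivity of `K`; this fails for `N` large.
-/

open Filter Topology Metric

def CompactFriendly {X : Type*} [NormedAddCommGroup X] [Lattice X] [Module ℝ X]
    (B : X →L[ℝ] X) : Prop :=
  ∃ R K A : X →L[ℝ] X, R ≠ 0 ∧ K ≠ 0 ∧ A ≠ 0 ∧
    (∀ x : X, 0 ≤ x → 0 ≤ R x) ∧ (∀ x : X, 0 ≤ x → 0 ≤ K x) ∧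
    IsCompactOperator K ∧ R.comp B = B.comp R ∧
    (∀ x : X, |A x| ≤ R |x|) ∧ (∀ x : X, |A x| ≤ K |x|)

theorem ContinuousMap.equicontinuous_of_totallyBounded_range {ι X α : Type*}
    [TopologicalSpace X] [CompactSpace X] [PseudoMetricSpace α] {F : ι → C(X, α)} (hF : TotallyBounded (Set.range F)) :
    Equicontinuous fun i => ⇑(F i) := by
  intro x₀
  rw [Metric.equicontinuousAt_iff_right]
  intro ε hε
  obtain ⟨t, ht, hFt⟩ := Metric.totallyBounded_iff.1 hF (ε / 3) (by positivity)
  have hnet : ∀ᶠ x in 𝓝 x₀, ∀ g ∈ t, dist (g x) (g x₀) < ε / 3 :=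
    (ht.eventually_all).2 fun g _ =>
      (g.continuous.tendsto x₀).eventually (ball_mem_nhds (g x₀) (by positivity))
  filter_upwards [hnet] with x hx i
  obtain ⟨g, hgt, hFg⟩ := Set.mem_iUnion₂.1 (hFt ⟨i, rfl⟩)
  have hFg' : dist (F i) g < ε / 3 := hFg
  calc dist (F i x₀) (F i x) ≤ dist (F i x₀) (g x₀) + dist (g x₀) (g x) + dist (g x) (F i x) :=
        dist_triangle4 _ _ _ _
    _ < ε / 3 + ε / 3 + ε / 3 := by
        gcongr
        · exact (ContinuousMap.dist_apply_le_dist x₀).trans_lt hFg'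
        · exact (dist_comm _ _).trans_lt (hx g hgt)
        · rw [dist_comm]; exact (ContinuousMap.dist_apply_le_dist x).trans_lt hFg'
    _ = ε := by ring

theorem IsCompactOperator.equicontinuous_image_closedBall {X E F : Type*} [TopologicalSpace X]
    [CompactSpace X] [NormedAddCommGroup E] [NormedSpace ℝ E] [NormedAddCommGroup F]
    [NormedSpace ℝ F] {K : E →L[ℝ] C(X, F)} (hK : IsCompactOperator K) (r : ℝ) :
    Equicontinuous fun g : closedBall (0 : E) r => ⇑(K g) := by
  obtain ⟨S, hS, hKS⟩ := hK.image_closedBall_subset_compact r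
  exact ContinuousMap.equicontinuous_of_totallyBounded_range <| hS.totallyBounded.subset <| by
    rwa [← Set.image_eq_range]

theorem Continuous.exists_isOpen_forall_eq_of_image_finite {X Y : Type*} [TopologicalSpace X]
    [TopologicalSpace Y] [T1Space Y] {f : X → Y} (hf : Continuous f) {U : Set X} (hU : IsOpen U)
    (hne : U.Nonempty) (hfin : (f '' U).Finite) :
    ∃ V : Set X, IsOpen V ∧ V.Nonempty ∧ ∃ c : Y, ∀ x ∈ V, f x = c := by
  obtain ⟨x, hx⟩ := hne
  refine ⟨U ∩ f ⁻¹' (f '' U \ {f x})ᶜ, hU.inter ?_, ⟨x, hx, by simp⟩, f x, ?_⟩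
  · exact ((hfin.subset Set.sdiff_subset).isClosed.isOpen_compl).preimage hf
  · rintro y ⟨hyU, hy⟩
    by_contra hne
    exact hy ⟨Set.mem_image_of_mem f hyU, hne⟩

theorem Finset.exists_pos_pairwiseDisjoint_ball {X : Type*} [MetricSpace X] (s : Finset X) :
    ∃ ε > 0, (s : Set X).PairwiseDisjoint fun x => ball x ε := by
  have hsep : ∀ᶠ ε in 𝓝[>] (0 : ℝ), 0 < ε ∧ ∀ p ∈ s.offDiag, ε + ε ≤ dist p.1 p.2 := by
    refine eventually_mem_nhdsWithin.and ((eventually_all_finset _).2 fun p hp => ?_)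
    have hpos : 0 < dist p.1 p.2 := dist_pos.2 (Finset.mem_offDiag.1 hp).2.2
    have hlim : Tendsto (fun ε : ℝ => ε + ε) (𝓝[>] 0) (𝓝 0) :=
      tendsto_nhdsWithin_of_tendsto_nhds <|
        (by fun_prop : Continuous fun ε : ℝ => ε + ε).tendsto' 0 0 (add_zero 0)
    exact (hlim.eventually (gt_mem_nhds hpos)).mono fun _ h => h.le
  obtain ⟨ε, hε, hε'⟩ := hsep.exists
  exact ⟨ε, hε, fun x hx y hy hxy => ball_disjoint_ball (hε' (x, y) (by simp_all))⟩

theorem Finset.sum_le_one_of_pairwiseDisjoint_support {ι α : Type*} {s : Finset ι}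
    {f : ι → α → ℝ} (hf : ∀ i ∈ s, ∀ a, f i a ≤ 1)
    (hdisj : (s : Set ι).PairwiseDisjoint fun i => Function.support (f i)) (a : α) :
    ∑ i ∈ s, f i a ≤ 1 := by
  by_cases h : ∃ i ∈ s, f i a ≠ 0
  · obtain ⟨i, hi, hia⟩ := h
    rw [Finset.sum_eq_single_of_mem i hi fun j hj hji => ?_]
    · exact hf i hi a
    · by_contra hja
      exact Set.disjoint_left.1 (hdisj hj hi hji) hja hia
  · push Not at h
    rw [Finset.sum_eq_zero h]
    exact zero_le_one

theorem exists_bumps_sum_le_one {E : Type*} [NormedAddCommGroup E] [NormedSpace ℝ E]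
    [HasContDiffBump E] (s : Finset E) :
    ∃ δ > 0, ∃ b : E → C(E, ℝ), (∀ t u, 0 ≤ b t u ∧ b t u ≤ 1) ∧
      (∀ t, Set.EqOn (b t) 1 (ball t δ)) ∧ ∀ u, ∑ t ∈ s, b t u ≤ 1 := by
  obtain ⟨ε, hε, hsep⟩ := s.exists_pos_pairwiseDisjoint_ball
  let bump (t : E) : ContDiffBump t := ⟨ε / 2, ε, half_pos hε, half_lt_self hε⟩
  exact ⟨ε / 2, half_pos hε, fun t => ⟨bump t, (bump t).continuous⟩,
    fun t u => ⟨(bump t).nonneg, (bump t).le_one⟩,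
    fun t _ hu => (bump t).one_of_mem_closedBall (ball_subset_closedBall hu),
    Finset.sum_le_one_of_pairwiseDisjoint_support (fun t _ _ => (bump t).le_one)
      (hsep.mono fun t => (bump t).support_eq.le)⟩

theorem sum_apply_mul_le_of_sum_le_one {ι X F : Type*} [Ring X] [PartialOrder X]
    [IsOrderedRing X] [FunLike F X X] [AddMonoidHomClass F X X] {K : F}
    (hK : ∀ x, 0 ≤ x → 0 ≤ K x) {s : Finset ι} {b : ι → X} (hb : ∑ i ∈ s, b i ≤ 1)
    {x : X} (hx : 0 ≤ x) : ∑ i ∈ s, K (b i * x) ≤ K x := by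
  rw [← map_sum, ← Finset.sum_mul, ← sub_nonneg, ← map_sub]
  exact hK _ (sub_nonneg.2 (by simpa using mul_le_mul_of_nonneg_right hb hx))

def mulCommutant {𝕜 A : Type*} [CommSemiring 𝕜] [Semiring A] [Algebra 𝕜 A] (T : A →ₗ[𝕜] A) :
    Subalgebra 𝕜 A where
  carrier := {w | ∀ f, T (w * f) = w * T f}
  mul_mem' {v w} hv hw f := by rw [mul_assoc, hv, hw, mul_assoc]
  add_mem' {v w} hv hw f := by rw [add_mul, map_add, hv, hw, add_mul]
  algebraMap_mem' c f := by rw [← Algebra.smul_def, ← Algebra.smul_def, map_smul]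

theorem mem_mulCommutant {𝕜 A : Type*} [CommSemiring 𝕜] [Semiring A] [Algebra 𝕜 A]
    {T : A →ₗ[𝕜] A} {w : A} : w ∈ mulCommutant T ↔ ∀ f, T (w * f) = w * T f :=
  Iff.rfl

section

variable {Ω : Type*} [TopologicalSpace Ω] [CompactSpace Ω] {R : C(Ω, ℝ) →L[ℝ] C(Ω, ℝ)}
  {φ : C(Ω, ℝ)} {ω₀ : Ω}

theorem norm_mul_abs_le_of_abs_le_one {f x : C(Ω, ℝ)} (hf : ∀ ω, |f ω| ≤ 1) :
    ‖f * |x|‖ ≤ ‖x‖ := by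
  refine (ContinuousMap.norm_le _ (norm_nonneg x)).2 fun ω => ?_
  have hx : |x ω| ≤ ‖x‖ := by simpa using x.norm_coe_le_norm ω
  simpa [abs_mul] using (mul_le_of_le_one_left (abs_nonneg _) (hf ω)).trans hx

theorem apply_eq_zero_of_mem_mulCommutant {w f : C(Ω, ℝ)} {ρ : ℝ}
    (hw : w ∈ mulCommutant (R : C(Ω, ℝ) →ₗ[ℝ] C(Ω, ℝ))) (hw₀ : w ω₀ = 1) (hρ₀ : 0 ≤ ρ)
    (hρ₁ : ρ < 1) (hwf : ∀ ω, f ω ≠ 0 → |w ω| ≤ ρ) : R f ω₀ = 0 := by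
  have hnorm (n : ℕ) : ‖w ^ n * f‖ ≤ ρ ^ n * ‖f‖ := by
    refine (ContinuousMap.norm_le _ (by positivity)).2 fun ω => ?_
    by_cases hfω : f ω = 0
    · simp [hfω]; positivity
    · rw [ContinuousMap.mul_apply, norm_mul, ContinuousMap.pow_apply, norm_pow]
      exact mul_le_mul (pow_le_pow_left₀ (norm_nonneg _) (hwf ω hfω) n) (f.norm_coe_le_norm ω)
        (norm_nonneg _) (by positivity)
  have hbound (n : ℕ) : |R f ω₀| ≤ ‖R‖ * ‖f‖ * ρ ^ n := by
    have hpow : R (w ^ n * f) = w ^ n * R f := mem_mulCommutant.1 (pow_mem hw n) f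
    calc |R f ω₀| = ‖R (w ^ n * f) ω₀‖ := by simp [hpow, hw₀]
      _ ≤ ‖R (w ^ n * f)‖ := ContinuousMap.norm_coe_le_norm _ _
      _ ≤ ‖R‖ * (ρ ^ n * ‖f‖) := R.le_of_opNorm_le_of_le le_rfl (hnorm n)
      _ = ‖R‖ * ‖f‖ * ρ ^ n := by ring
  have hlim : Tendsto (fun n : ℕ => ‖R‖ * ‖f‖ * ρ ^ n) atTop (𝓝 0) := by
    simpa using (tendsto_pow_atTop_nhds_zero_of_lt_one hρ₀ hρ₁).const_mul (‖R‖ * ‖f‖)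
  exact abs_nonpos_iff.1 (ge_of_tendsto' hlim hbound)

theorem apply_eq_zero_of_eqOn_preimage_ball {f : C(Ω, ℝ)}
    (hφ : φ ∈ mulCommutant (R : C(Ω, ℝ) →ₗ[ℝ] C(Ω, ℝ))) {ε : ℝ} (hε : 0 < ε)
    (hf : Set.EqOn f 0 (φ ⁻¹' ball (φ ω₀) ε)) : R f ω₀ = 0 := by
  set u := φ - algebraMap ℝ C(Ω, ℝ) (φ ω₀)
  have hu (ω : Ω) : |u ω| = dist (φ ω) (φ ω₀) := by simp [u, Real.dist_eq]
  -- `C` is chosen so that `0 ≤ w ≤ 1`, and `w ≤ 1 - ε ^ 2 / C` off `φ ⁻¹' ball (φ ω₀) ε`.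
  set C := ‖u‖ ^ 2 + ε ^ 2
  have hC : 0 < C := by positivity
  have huC (ω : Ω) : u ω ^ 2 / C ≤ 1 := by
    rw [div_le_one hC, ← sq_abs]
    have : |u ω| ≤ ‖u‖ := by simpa using u.norm_coe_le_norm ω
    nlinarith [abs_nonneg (u ω)]
  set w : C(Ω, ℝ) := 1 - C⁻¹ • u ^ 2
  have hw : w ∈ mulCommutant (R : C(Ω, ℝ) →ₗ[ℝ] C(Ω, ℝ)) :=
    sub_mem (one_mem _) <| Subalgebra.smul_mem _
      (pow_mem (sub_mem hφ (Subalgebra.algebraMap_mem _ _)) 2) _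
  have hw_apply (ω : Ω) : w ω = 1 - u ω ^ 2 / C := by simp [w, div_eq_inv_mul]
  refine apply_eq_zero_of_mem_mulCommutant hw (by simp [hw_apply, u]) (ρ := 1 - ε ^ 2 / C)
    (sub_nonneg.2 ((div_le_one hC).2 (le_add_of_nonneg_left (by positivity))))
    (sub_lt_self _ (by positivity)) fun ω hfω => ?_
  have hεu : ε ^ 2 ≤ u ω ^ 2 := by
    rw [← sq_abs (u ω), hu]
    exact pow_le_pow_left₀ hε.le (not_lt.1 fun h => hfω (hf h)) 2
  rw [hw_apply, abs_of_nonneg (sub_nonneg.2 (huC ω))]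
  gcongr

variable {A : C(Ω, ℝ) →L[ℝ] C(Ω, ℝ)}

theorem apply_eq_apply_of_eqOn_preimage_ball {f g : C(Ω, ℝ)}
    (hφ : φ ∈ mulCommutant (R : C(Ω, ℝ) →ₗ[ℝ] C(Ω, ℝ))) (hAR : ∀ x, |A x| ≤ R |x|) {ε : ℝ}
    (hε : 0 < ε) (hfg : Set.EqOn f g (φ ⁻¹' ball (φ ω₀) ε)) : A f ω₀ = A g ω₀ := by
  have hR : R |f - g| ω₀ = 0 :=
    apply_eq_zero_of_eqOn_preimage_ball hφ hε fun ω hω => by simp [hfg hω]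
  have hA : |A (f - g) ω₀| ≤ 0 := by simpa [hR] using hAR (f - g) ω₀
  simpa [sub_eq_zero] using abs_nonpos_iff.1 hA

theorem abs_apply_le_apply_comp_mul_abs {K : C(Ω, ℝ) →L[ℝ] C(Ω, ℝ)}
    (hφ : φ ∈ mulCommutant (R : C(Ω, ℝ) →ₗ[ℝ] C(Ω, ℝ))) (hAR : ∀ x, |A x| ≤ R |x|)
    (hAK : ∀ x, |A x| ≤ K |x|) {b : C(ℝ, ℝ)} (hb₀ : ∀ t, 0 ≤ b t) {ε : ℝ} (hε : 0 < ε)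
    (hb₁ : Set.EqOn b 1 (ball (φ ω₀) ε)) (x : C(Ω, ℝ)) :
    |A x ω₀| ≤ K (b.comp φ * |x|) ω₀ := by
  have hloc : A x ω₀ = A (b.comp φ * x) ω₀ :=
    apply_eq_apply_of_eqOn_preimage_ball hφ hAR hε fun ω hω => by simp [hb₁ hω]
  have habs : |b.comp φ * x| = b.comp φ * |x| := by
    ext ω
    simp [abs_mul, abs_of_nonneg (hb₀ (φ ω))]
  simpa [hloc, habs] using hAK (b.comp φ * x) ω₀

theorem eq_zero_of_forall_isOpen_image_infinite {K : C(Ω, ℝ) →L[ℝ] C(Ω, ℝ)}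
    (hφ : φ ∈ mulCommutant (R : C(Ω, ℝ) →ₗ[ℝ] C(Ω, ℝ))) (hKpos : ∀ x, 0 ≤ x → 0 ≤ K x)
    (hK : IsCompactOperator K) (hAR : ∀ x, |A x| ≤ R |x|) (hAK : ∀ x, |A x| ≤ K |x|)
    (hφU : ∀ U : Set Ω, IsOpen U → U.Nonempty → (φ '' U).Infinite) : A = 0 := by
  ext x ω₀
  by_contra hA
  set c := |A x ω₀|
  have hc : 0 < c := abs_pos.2 (by simpa using hA)
  have hnear : ∀ᶠ ω in 𝓝 ω₀, c / 2 < |A x ω| ∧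
      ∀ g : closedBall (0 : C(Ω, ℝ)) ‖x‖, dist (K g ω₀) (K g ω) < c / 4 :=
    (((continuous_abs.comp (A x).continuous).tendsto ω₀).eventually
      (lt_mem_nhds (half_lt_self hc))).and
    (Metric.equicontinuousAt_iff_right.1 (hK.equicontinuous_image_closedBall ‖x‖ ω₀) _
      (by positivity))
  obtain ⟨V, hVnear, hV, hω₀V⟩ := mem_nhds_iff.1 hnear
  obtain ⟨N, hN⟩ := exists_nat_gt (K |x| ω₀ / (c / 4))
  obtain ⟨s, hsV, rfl⟩ := (hφU V hV ⟨ω₀, hω₀V⟩).exists_subset_card_eq N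
  obtain ⟨δ, hδ, b, hb, hb₁, hbs⟩ := exists_bumps_sum_le_one s
  have hlow : ∀ t ∈ s, c / 4 < K ((b t).comp φ * |x|) ω₀ := by
    intro t ht
    obtain ⟨ω, hωV, rfl⟩ := hsV ht
    have hnorm : ‖(b (φ ω)).comp φ * |x|‖ ≤ ‖x‖ :=
      norm_mul_abs_le_of_abs_le_one fun _ =>
        abs_le.2 ⟨(neg_nonpos.2 zero_le_one).trans (hb _ _).1, (hb _ _).2⟩
    have hAx := abs_apply_le_apply_comp_mul_abs (ω₀ := ω) hφ hAR hAK (fun u => (hb _ u).1) hδ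
      (hb₁ _) x
    have hKω := (hVnear hωV).2 ⟨_, mem_closedBall_zero_iff.2 hnorm⟩
    rw [Real.dist_eq, abs_sub_lt_iff] at hKω
    linarith [(hVnear hωV).1]
  have hsum : s.card • (c / 4) ≤ ∑ t ∈ s, K ((b t).comp φ * |x|) ω₀ :=
    s.card_nsmul_le_sum _ _ fun t ht => (hlow t ht).le
  have hupp : ∑ t ∈ s, K ((b t).comp φ * |x|) ω₀ ≤ K |x| ω₀ := by
    simpa using sum_apply_mul_le_of_sum_le_one hKpos (fun ω => by simpa using hbs (φ ω))
      (abs_nonneg x) ω₀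
  rw [div_lt_iff₀ (by positivity)] at hN
  rw [nsmul_eq_mul] at hsum
  linarith

end

theorem compactFriendly_multiplication_CΩ_has_flat_general
    {Ω : Type*} [TopologicalSpace Ω] [CompactSpace Ω]
    (φ : C(Ω, ℝ))
    (Mφ : C(Ω, ℝ) →L[ℝ] C(Ω, ℝ)) (hMφ : ∀ f : C(Ω, ℝ), Mφ f = φ * f)
    (hcf : CompactFriendly Mφ) :
    ∃ V : Set Ω, IsOpen V ∧ V.Nonempty ∧ ∃ c : ℝ, ∀ ω ∈ V, φ ω = c := by
  obtain ⟨R, K, A, -, -, hA, -, hKpos, hK, hRM, hAR, hAK⟩ := hcf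
  have hφ : φ ∈ mulCommutant (R : C(Ω, ℝ) →ₗ[ℝ] C(Ω, ℝ)) := fun f => by
    simpa [hMφ] using congr($hRM f)
  by_contra hflat
  exact hA (eq_zero_of_forall_isOpen_image_infinite hφ hKpos hK hAR hAK fun U hU hne hfin =>
    hflat (φ.continuous.exists_isOpen_forall_eq_of_image_finite hU hne hfin))

/-- if the positive multiplication operator `M_φ` on `C(Ω)` (`Ω` compact
Hausdorff, `0 ≤ φ`) is compact-friendly, then `φ` is constant on some non-empty open set. -/
theorem compactFriendly_multiplication_CΩ_has_flat
    {Ω : Type*} [TopologicalSpace Ω] [CompactSpace Ω] [T2Space Ω]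
    (φ : C(Ω, ℝ)) (hφ : 0 ≤ φ)
    (Mφ : C(Ω, ℝ) →L[ℝ] C(Ω, ℝ)) (hMφ : ∀ f : C(Ω, ℝ), Mφ f = φ * f)
    (hcf : CompactFriendly Mφ) :
    ∃ V : Set Ω, IsOpen V ∧ V.Nonempty ∧ ∃ c : ℝ, ∀ ω ∈ V, φ ω = c :=
  compactFriendly_multiplication_CΩ_has_flat_general φ Mφ hMφ hcf
end

section
/- Let Ω be a compact Hausdorff space and 0 ≤ φ ∈ C(Ω). The positive multiplication operator M_φ on C(Ω) is compact-friendly if and only if φ is constant on some non-empty open subset of Ω. -/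
/-!
If `φ = c` on an open set `V ∋ ω₀` and `g` is an Urysohn function with `g ω₀ = 1` vanishing
off `V`, then `φ * g = c • g`, so the positive rank-one operator `f ↦ f ω₀ • g` commutes with
`M_φ`; it serves as `R`, `K` and `A` at once.

Conversely, by Stone–Weierstrass `R` commutes with multiplication by `h ∘ φ` for every
continuous `h`, so `|A u| ≤ R |u|` forces `A u ω = 0` whenever `u` vanishes on the preimage
under `φ` of a neighbourhood of `φ ω`. If `φ` is nowhere locally constant, the open set where
`|A x| > ‖A x‖ / 2` has infinitely many values under `φ`, around which we place bumps `g n`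
with disjoint supports. Then `‖A ((g n ∘ φ) * x)‖ > ‖A x‖ / 2`, whereas the positive compact
operator `K` sends the disjoint sequence `|(g n ∘ φ) * x| ≤ |x|` to a null sequence: pointwise
because `∑ K |(g n ∘ φ) * x| ≤ K |x|`, hence in norm by compactness.
-/

open Filter Topology Metric Function

theorem Finset.sum_le_of_pairwise_mul_eq_zero {ι R : Type*} [Semiring R] [NoZeroDivisors R]
    [Preorder R] (s : Finset ι) {a : ι → R} {c : R} (hc : 0 ≤ c) (hac : ∀ i, a i ≤ c)
    (ha : Pairwise fun i j => a i * a j = 0) : ∑ i ∈ s, a i ≤ c := by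
  by_cases h : ∃ i ∈ s, a i ≠ 0
  · obtain ⟨i, hi, hai⟩ := h
    rw [Finset.sum_eq_single_of_mem i hi fun j _ hji =>
      (mul_eq_zero.1 (ha hji)).resolve_right hai]
    exact hac i
  · push Not at h
    rwa [Finset.sum_eq_zero h]

theorem tendsto_of_isCompact_of_tendsto_comp {X Y : Type*} [TopologicalSpace X]
    [TopologicalSpace Y] [T2Space Y] {e : X → Y} (he : Continuous e) (he' : Injective e)
    {s : Set X} (hs : IsCompact s) {u : ℕ → X} (hu : ∀ n, u n ∈ s) {x : X}
    (h : Tendsto (e ∘ u) atTop (𝓝 (e x))) : Tendsto u atTop (𝓝 x) := by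
  refine hs.tendsto_nhds_of_unique_mapClusterPt (.of_forall hu) fun y _ hy => he' ?_
  by_contra hne
  exact clusterPt_iff_not_disjoint.1 (ClusterPt.mono (hy.tendsto_comp (he.tendsto y)) h)
    (disjoint_nhds_nhds.2 hne)

theorem exists_isOpen_eqOn_const_of_finite_image {X Y : Type*} [TopologicalSpace X]
    [TopologicalSpace Y] [T1Space Y] {f : X → Y} (hf : Continuous f) {U : Set X} (hU : IsOpen U)
    (hne : U.Nonempty) (hfin : (f '' U).Finite) :
    ∃ V : Set X, IsOpen V ∧ V.Nonempty ∧ ∃ c, ∀ x ∈ V, f x = c := by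
  obtain ⟨x, hx⟩ := hne
  refine ⟨U ∩ f ⁻¹' (f '' U \ {f x})ᶜ, hU.inter (hfin.sdiff.isClosed.isOpen_compl.preimage hf),
    ⟨x, hx, by simp⟩, f x, fun y ⟨hyU, hy⟩ => ?_⟩
  by_contra hne
  exact hy ⟨⟨y, hyU, rfl⟩, hne⟩

theorem exists_seq_pairwise_disjoint_ball {X : Type*} [MetricSpace X] {S C : Set X}
    (hS : S.Infinite) (hC : IsCompact C) (hSC : S ⊆ C) :
    ∃ (t : ℕ → X) (r : ℕ → ℝ), (∀ n, t n ∈ S) ∧ (∀ n, 0 < r n) ∧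
      Pairwise (Disjoint on fun n => ball (t n) (r n)) := by
  obtain ⟨L, -, hL⟩ := hS.exists_accPt_of_subset_isCompact hC hSC
  have hnear : ∀ ε > 0, ∃ y ∈ S \ {L}, dist y L < ε := fun ε hε => by
    obtain ⟨y, ⟨hyε, hyS⟩, hyL⟩ := accPt_iff_nhds.1 hL _ (ball_mem_nhds L hε)
    exact ⟨y, ⟨hyS, hyL⟩, hyε⟩
  set D := (dist · L) '' (S \ {L})
  have hglb : IsGLB D 0 := by
    refine ⟨by rintro _ ⟨y, -, rfl⟩; exact dist_nonneg, fun b hb => not_lt.1 fun hb0 => ?_⟩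
    obtain ⟨y, hy, hyb⟩ := hnear b hb0
    exact (hb ⟨y, hy, rfl⟩).not_gt hyb
  have h0 : (0 : ℝ) ∉ D := by
    rintro ⟨y, ⟨-, hyL⟩, hy⟩
    exact hyL (dist_eq_zero.1 hy)
  obtain ⟨y, hy, -⟩ := hnear 1 one_pos
  obtain ⟨a, ha, -, -, haD⟩ := hglb.exists_seq_strictAnti_tendsto_of_notMem h0 ⟨_, y, hy, rfl⟩
  choose t ht hta using haD
  simp only at hta
  -- `t (2n+1)` sits in the annulus `a (2n+2) < dist · L < a (2n)`, and these annuli are disjoint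
  set r : ℕ → ℝ := fun n => min (a (2 * n) - a (2 * n + 1)) (a (2 * n + 1) - a (2 * n + 2))
  have hr : ∀ n, 0 < r n := fun n =>
    lt_min (sub_pos.2 (ha (by omega))) (sub_pos.2 (ha (by omega)))
  have hann : ∀ n,
      ball (t (2 * n + 1)) (r n) ⊆ (dist · L) ⁻¹' Set.Ioo (a (2 * (n + 1))) (a (2 * n)) := by
    intro n z hz
    rw [mem_ball, lt_min_iff] at hz
    have h1 := dist_triangle z (t (2 * n + 1)) L
    have h2 := dist_triangle (t (2 * n + 1)) z L
    rw [hta] at h1 h2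
    rw [dist_comm] at h2
    show a (2 * n + 2) < dist z L ∧ dist z L < a (2 * n)
    exact ⟨by linarith [hz.2], by linarith [hz.1]⟩
  have hdisj := (ha.antitone.comp_monotone
    (fun _ _ h => Nat.mul_le_mul_left 2 h : Monotone (2 * ·))).pairwise_disjoint_on_Ioo_succ
  exact ⟨fun n => t (2 * n + 1), r, fun n => (ht _).1, hr,
    fun n m hnm => ((hdisj hnm).preimage _).mono (hann n) (hann m)⟩

theorem exists_seq_bump_pairwise_mul_eq_zero {E : Type*} [NormedAddCommGroup E]
    [NormedSpace ℝ E] [HasContDiffBump E] {t : ℕ → E} {r : ℕ → ℝ} (hr : ∀ n, 0 < r n)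
    (hdisj : Pairwise (Disjoint on fun n => ball (t n) (r n))) :
    ∃ g : ℕ → C(E, ℝ), (∀ n s, 0 ≤ g n s ∧ g n s ≤ 1) ∧ (∀ n, g n =ᶠ[𝓝 (t n)] 1) ∧
      Pairwise fun n m => g n * g m = 0 := by
  let b n : ContDiffBump (t n) := ⟨r n / 2, r n, half_pos (hr n), half_lt_self (hr n)⟩
  refine ⟨fun n => ⟨b n, (b n).continuous⟩, fun n s => ⟨(b n).nonneg, (b n).le_one⟩,
    fun n => (b n).eventuallyEq_one, fun n m hnm => ?_⟩
  ext s
  by_cases hs : s ∈ ball (t n) (r n)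
  · simp [(b m).zero_of_le_dist (not_lt.1 fun h => Set.disjoint_left.1 (hdisj hnm) hs h)]
  · simp [(b n).zero_of_le_dist (not_lt.1 hs)]

namespace ContinuousMap

variable {Ω : Type*} [TopologicalSpace Ω] [CompactSpace Ω]

theorem norm_le_norm_of_abs_le {f g : C(Ω, ℝ)} (h : |f| ≤ g) : ‖f‖ ≤ ‖g‖ :=
  (norm_le f (norm_nonneg g)).2 fun ω =>
    (h ω).trans ((le_abs_self _).trans (norm_coe_le_norm g ω))

theorem nonempty_setOf_half_norm_lt_abs {f : C(Ω, ℝ)} (hf : f ≠ 0) :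
    {ω | ‖f‖ / 2 < |f ω|}.Nonempty := by
  by_contra h
  have : ‖f‖ ≤ ‖f‖ / 2 := (norm_le _ (by positivity)).2 fun ω => not_lt.1 fun hω => h ⟨ω, hω⟩
  linarith [norm_pos_iff.2 hf]

def mulCommutant (R : C(Ω, ℝ) →L[ℝ] C(Ω, ℝ)) : Subalgebra ℝ C(Ω, ℝ) where
  carrier := {ψ | ∀ f, R (ψ * f) = ψ * R f}
  mul_mem' {a b} ha hb f := by rw [mul_assoc, ha, hb, mul_assoc]
  one_mem' f := by rw [one_mul, one_mul]
  add_mem' {a b} ha hb f := by rw [add_mul, map_add, ha, hb, add_mul]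
  algebraMap_mem' r f := by rw [← Algebra.smul_def, map_smul, Algebra.smul_def]

theorem isClosed_mulCommutant (R : C(Ω, ℝ) →L[ℝ] C(Ω, ℝ)) :
    IsClosed (mulCommutant R : Set C(Ω, ℝ)) := by
  have : (mulCommutant R : Set C(Ω, ℝ)) = ⋂ f, {ψ | R (ψ * f) = ψ * R f} := by
    ext; simp [mulCommutant]
  rw [this]
  exact isClosed_iInter fun f =>
    isClosed_eq (R.continuous.comp (continuous_mul_const f)) (continuous_mul_const (R f))

theorem comp_mem_mulCommutant {R : C(Ω, ℝ) →L[ℝ] C(Ω, ℝ)} {φ : C(Ω, ℝ)}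
    (hφ : φ ∈ mulCommutant R) (g : C(ℝ, ℝ)) : g.comp φ ∈ mulCommutant R := by
  have := comp_attachBound_mem_closure (mulCommutant R) ⟨φ, hφ⟩ (g.restrict _)
  exact Subalgebra.topologicalClosure_minimal le_rfl (isClosed_mulCommutant R) this

theorem apply_eq_zero_of_forall_mem_nhds {R A : C(Ω, ℝ) →L[ℝ] C(Ω, ℝ)} {φ : C(Ω, ℝ)}
    (hφ : φ ∈ mulCommutant R) (hAR : ∀ u, |A u| ≤ R |u|) {u : C(Ω, ℝ)} {ω : Ω} {N : Set ℝ}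
    (hN : N ∈ 𝓝 (φ ω)) (hu : ∀ ω', φ ω' ∈ N → u ω' = 0) : A u ω = 0 := by
  obtain ⟨r, hr, hrN⟩ := Metric.mem_nhds_iff.1 hN
  let b : ContDiffBump (φ ω) := ⟨r / 2, r, by positivity, by linarith⟩
  have hvan : (⟨b, b.continuous⟩ : C(ℝ, ℝ)).comp φ * |u| = 0 := by
    ext ω'
    by_cases hω' : φ ω' ∈ ball (φ ω) r
    · simp [hu ω' (hrN hω')]
    · simp [b.zero_of_le_dist (not_lt.1 hω')]
  have hcomm := comp_mem_mulCommutant hφ ⟨b, b.continuous⟩ |u|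
  rw [hvan, map_zero] at hcomm
  have hRu : R |u| ω = 0 := by
    simpa [b.one_of_mem_closedBall (mem_closedBall_self (by positivity))] using
      congr($hcomm ω).symm
  exact abs_nonpos_iff.1 (((hAR u) ω).trans hRu.le)

theorem tendsto_zero_of_pairwise_mul_eq_zero {K : C(Ω, ℝ) →L[ℝ] C(Ω, ℝ)}
    (hKpos : ∀ f, 0 ≤ f → 0 ≤ K f) (hK : IsCompactOperator K) {y : ℕ → C(Ω, ℝ)} {b : C(Ω, ℝ)}
    (hy0 : ∀ n, 0 ≤ y n) (hyb : ∀ n, y n ≤ b) (hy : Pairwise fun n m => y n * y m = 0) :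
    Tendsto (fun n => K (y n)) atTop (𝓝 0) := by
  have hsum : ∀ N, ∑ n ∈ Finset.range N, y n ≤ b := fun N ω => by
    simpa using Finset.sum_le_of_pairwise_mul_eq_zero (Finset.range N)
      ((hy0 0).trans (hyb 0) ω) (fun n => hyb n ω) fun n m h => by simpa using congr($(hy h) ω)
  have hpt : ∀ ω, Tendsto (fun n => K (y n) ω) atTop (𝓝 0) := fun ω => by
    refine (summable_of_sum_range_le (c := K b ω) (fun n => hKpos _ (hy0 n) ω)
      fun N => ?_).tendsto_atTop_zero
    simpa [map_sub, map_sum] using hKpos _ (sub_nonneg.2 (hsum N)) ω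
  refine tendsto_of_isCompact_of_tendsto_comp continuous_coeFun DFunLike.coe_injective
    (hK.isCompact_closure_image_closedBall ‖b‖) (fun n => subset_closure ⟨y n, ?_, rfl⟩) ?_
  · rw [mem_closedBall_zero_iff]
    exact norm_le_norm_of_abs_le ((abs_of_nonneg (hy0 n)).trans_le (hyb n))
  · simpa [tendsto_pi_nhds] using hpt

theorem exists_isOpen_eqOn_const_of_dominated {φ : C(Ω, ℝ)} {R K A : C(Ω, ℝ) →L[ℝ] C(Ω, ℝ)}
    (hφ : φ ∈ mulCommutant R) (hKpos : ∀ f, 0 ≤ f → 0 ≤ K f) (hK : IsCompactOperator K)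
    (hAR : ∀ u, |A u| ≤ R |u|) (hAK : ∀ u, |A u| ≤ K |u|) (hA : A ≠ 0) :
    ∃ V : Set Ω, IsOpen V ∧ V.Nonempty ∧ ∃ c, ∀ ω ∈ V, φ ω = c := by
  by_contra hflat
  obtain ⟨x, hx⟩ : ∃ x, A x ≠ 0 := by
    by_contra! h
    exact hA (ContinuousLinearMap.ext h)
  set U := {ω | ‖A x‖ / 2 < |A x ω|}
  have hU : IsOpen U := isOpen_lt continuous_const (A x).continuous.abs
  have hinf : (φ '' U).Infinite := fun hfin =>
    hflat (exists_isOpen_eqOn_const_of_finite_image φ.continuous hU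
      (nonempty_setOf_half_norm_lt_abs hx) hfin)
  obtain ⟨t, r, htU, hr, hdisj⟩ := exists_seq_pairwise_disjoint_ball hinf
    (isCompact_range φ.continuous) (Set.image_subset_range _ _)
  choose ω hωU hωt using htU
  obtain ⟨g, hg, hg1, hgg⟩ := exists_seq_bump_pairwise_mul_eq_zero hr hdisj
  set y : ℕ → C(Ω, ℝ) := fun n => (g n).comp φ * x
  have hAy : ∀ n, A (y n) (ω n) = A x (ω n) := fun n => by
    have := apply_eq_zero_of_forall_mem_nhds hφ hAR (u := x - y n)
      (by rw [hωt n]; exact hg1 n) fun ω' (hω' : g n (φ ω') = 1) => by simp [y, hω']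
    rw [map_sub, sub_apply, sub_eq_zero] at this
    exact this.symm
  have hlow : ∀ n, ‖A x‖ / 2 < ‖K |y n|‖ := fun n => by
    calc ‖A x‖ / 2 < |A (y n) (ω n)| := hAy n ▸ hωU n
      _ ≤ ‖A (y n)‖ := norm_coe_le_norm (A (y n)) (ω n)
      _ ≤ ‖K |y n|‖ := norm_le_norm_of_abs_le (hAK (y n))
  have hnull : Tendsto (fun n => K |y n|) atTop (𝓝 0) := by
    refine tendsto_zero_of_pairwise_mul_eq_zero hKpos hK (fun n => abs_nonneg _) (b := |x|)
      (fun n ω' => ?_) fun n m hnm => ?_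
    · simpa [y, abs_mul] using
        mul_le_of_le_one_left (abs_nonneg (x ω'))
          (abs_le.2 ⟨by linarith [(hg n (φ ω')).1], (hg n (φ ω')).2⟩)
    · ext ω'
      have := congr($(hgg hnm) (φ ω'))
      rcases mul_eq_zero.1 this with h | h <;> simp [y, h]
  have hnorm := hnull.norm
  rw [norm_zero] at hnorm
  obtain ⟨n, hn⟩ := (hnorm.eventually (gt_mem_nhds (half_pos (norm_pos_iff.2 hx)))).exists
  exact (hlow n).not_gt hn

theorem compactFriendly_of_isOpen_eqOn_const [T2Space Ω] {φ : C(Ω, ℝ)}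
    {M : C(Ω, ℝ) →L[ℝ] C(Ω, ℝ)} (hM : ∀ f, M f = φ * f) {V : Set Ω} (hV : IsOpen V)
    (hne : V.Nonempty) {c : ℝ} (hc : ∀ ω ∈ V, φ ω = c) : CompactFriendly M := by
  obtain ⟨ω₀, hω₀⟩ := hne
  obtain ⟨g, hgV, hg₀, hg01⟩ := exists_continuous_zero_one_of_isClosed hV.isClosed_compl
    isClosed_singleton (Set.disjoint_singleton_right.2 (not_not.2 hω₀))
  have hg : 0 ≤ g := fun ω => (hg01 ω).1
  have hφg : φ * g = c • g := by
    ext ω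
    by_cases hω : ω ∈ V
    · simp [hc ω hω]
    · simp [hgV hω]
  set T := (ContinuousLinearMap.toSpanSingleton ℝ g).comp (evalCLM ℝ ω₀)
  have hT : ∀ f, T f = f ω₀ • g := fun f => rfl
  have hT0 : T ≠ 0 := fun h => by
    simpa [hT, hg₀ rfl] using congr($h 1 ω₀)
  have hTpos : ∀ f, 0 ≤ f → 0 ≤ T f := fun f hf => by
    rw [hT]
    exact smul_nonneg (hf ω₀) hg
  have hTabs : ∀ f, |T f| ≤ T |f| := fun f ω => by
    simp [hT, abs_mul, abs_of_nonneg (hg01 ω).1]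
  refine ⟨T, T, T, hT0, hT0, hT0, hTpos, hTpos,
    (isCompactOperator_of_locallyCompactSpace_dom (evalCLM ℝ ω₀)).clm_comp
      (ContinuousLinearMap.toSpanSingleton ℝ g), ?_, hTabs, hTabs⟩
  ext f ω
  simp [hT, hM, hφg, hc ω₀ hω₀]
  ring

end ContinuousMap

theorem compactFriendly_multiplication_CΩ_iff_flat_general
    {Ω : Type*} [TopologicalSpace Ω] [CompactSpace Ω] [T2Space Ω]
    (φ : C(Ω, ℝ))
    (Mφ : C(Ω, ℝ) →L[ℝ] C(Ω, ℝ)) (hMφ : ∀ f : C(Ω, ℝ), Mφ f = φ * f) :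
    CompactFriendly Mφ ↔
      ∃ V : Set Ω, IsOpen V ∧ V.Nonempty ∧ ∃ c : ℝ, ∀ ω ∈ V, φ ω = c := by
  constructor
  · rintro ⟨R, K, A, -, -, hA, -, hKpos, hK, hRM, hAR, hAK⟩
    have hφ : φ ∈ ContinuousMap.mulCommutant R := fun f => by
      simpa [hMφ] using congr($hRM f)
    exact ContinuousMap.exists_isOpen_eqOn_const_of_dominated hφ hKpos hK hAR hAK hA
  · rintro ⟨V, hV, hne, c, hc⟩
    exact ContinuousMap.compactFriendly_of_isOpen_eqOn_const hMφ hV hne hc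

/-- the positive multiplication operator `M_φ` on `C(Ω)` (`Ω` compact
Hausdorff, `0 ≤ φ`) is compact-friendly iff `φ` is constant on a non-empty open set. -/
theorem compactFriendly_multiplication_CΩ_iff_flat
    {Ω : Type*} [TopologicalSpace Ω] [CompactSpace Ω] [T2Space Ω]
    (φ : C(Ω, ℝ)) (hφ : 0 ≤ φ)
    (Mφ : C(Ω, ℝ) →L[ℝ] C(Ω, ℝ)) (hMφ : ∀ f : C(Ω, ℝ), Mφ f = φ * f) :
    CompactFriendly Mφ ↔
      ∃ V : Set Ω, IsOpen V ∧ V.Nonempty ∧ ∃ c : ℝ, ∀ ω ∈ V, φ ω = c :=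
  compactFriendly_multiplication_CΩ_iff_flat_general φ Mφ hMφ
end

section
/- Define R : L_∞([0,1]²) → L_∞([0,1]²) by (Rf)(x,y) = ∫₀¹ f(t,y) dt, and let φ(x,y) = y. Then R is a positive bounded operator commuting with the multiplication operator M_φ, the multiplier φ has no flat (every level set φ⁻¹({γ}) is Lebesgue-null in [0,1]²), and R is not disjointness preserving: there exist f, g ∈ L_∞([0,1]²) with |f| ∧ |g| = 0 but |Rf| ∧ |Rg| ≠ 0. -/
/-!
Integrating out the first variable leaves a function of the second variable only, so the
operator commutes with multiplication by any function of `y`, while it destroys all dependence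
on `x`: the disjoint indicators of `s × β` and `sᶜ × β` are sent to the positive constants
`μ s` and `μ sᶜ`, which are not disjoint.
-/

open MeasureTheory ENNReal Filter Set

namespace MeasureTheory.Lp

variable {α E : Type*} [MeasurableSpace α] {μ : Measure α} [NormedAddCommGroup E]

theorem ae_norm_le_norm_top (f : Lp E ∞ μ) : ∀ᵐ x ∂μ, ‖f x‖ ≤ ‖f‖ := by
  filter_upwards [ae_le_eLpNormEssSup (f := ⇑f)] with x hx
  rw [Lp.norm_def, eLpNorm_exponent_top, ← toReal_enorm]
  exact ENNReal.toReal_mono (eLpNorm_exponent_top (f := ⇑f) ▸ Lp.eLpNorm_ne_top f) hx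

theorem norm_le_of_ae_bound_top {f : Lp E ∞ μ} {C : ℝ} (hC : 0 ≤ C)
    (hfC : ∀ᵐ x ∂μ, ‖f x‖ ≤ C) : ‖f‖ ≤ C := by
  rw [Lp.norm_def, eLpNorm_exponent_top, ← ENNReal.toReal_ofReal hC]
  exact ENNReal.toReal_mono ofReal_ne_top (eLpNormEssSup_le_of_ae_bound hfC)

theorem abs_inf_abs_eq_zero_iff {p : ℝ≥0∞} (f g : Lp ℝ p μ) :
    |f| ⊓ |g| = 0 ↔ ∀ᵐ x ∂μ, |f x| ⊓ |g x| = 0 := by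
  have h : ⇑(|f| ⊓ |g|) =ᵐ[μ] fun x => |f x| ⊓ |g x| := by
    filter_upwards [Lp.coeFn_inf |f| |g|, Lp.coeFn_abs f, Lp.coeFn_abs g] with x hinf hf hg
    rw [hinf, Pi.inf_apply, hf, hg]
  rw [Lp.eq_zero_iff_ae_eq_zero]
  exact ⟨h.symm.trans, h.trans⟩

end MeasureTheory.Lp

section IntegralFst

variable {α β : Type*} [MeasurableSpace α] [MeasurableSpace β] {μ : Measure α} {ν : Measure β}

theorem ae_ae_swap_of_ae_prod [SFinite μ] [SFinite ν] {p : α × β → Prop}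
    (h : ∀ᵐ z ∂μ.prod ν, p z) : ∀ᵐ y ∂ν, ∀ᵐ x ∂μ, p (x, y) :=
  Measure.ae_ae_of_ae_prod (Measure.measurePreserving_swap.quasiMeasurePreserving.ae h)

noncomputable def integralFst (μ : Measure α) (f : α × β → ℝ) (q : α × β) : ℝ :=
  ∫ t, f (t, q.2) ∂μ

theorem integralFst_congr_ae [SFinite μ] [SFinite ν] {f g : α × β → ℝ}
    (h : f =ᵐ[μ.prod ν] g) : integralFst μ f =ᵐ[μ.prod ν] integralFst μ g := by
  have hsec : ∀ᵐ y ∂ν, ∫ t, f (t, y) ∂μ = ∫ t, g (t, y) ∂μ := by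
    filter_upwards [ae_ae_swap_of_ae_prod h] with y hy using integral_congr_ae hy
  exact Measure.quasiMeasurePreserving_snd.ae hsec

variable [IsFiniteMeasure μ] [SFinite ν]

theorem ae_integrable_section_and_norm_le (f : Lp ℝ ∞ (μ.prod ν)) :
    ∀ᵐ y ∂ν, Integrable (fun t => f (t, y)) μ ∧ ∀ᵐ t ∂μ, ‖f (t, y)‖ ≤ ‖f‖ := by
  filter_upwards [ae_ae_swap_of_ae_prod (Lp.ae_norm_le_norm_top f),
    (Lp.aestronglyMeasurable f).prod_swap.prodMk_left] with y hbound hmeas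
  exact ⟨(memLp_top_of_bound hmeas ‖f‖ hbound).integrable le_top, hbound⟩

theorem ae_norm_integralFst_le (f : Lp ℝ ∞ (μ.prod ν)) :
    ∀ᵐ q ∂μ.prod ν, ‖integralFst μ f q‖ ≤ ‖f‖ * μ.real univ :=
  Measure.quasiMeasurePreserving_snd.ae <| (ae_integrable_section_and_norm_le f).mono
    fun _ hy => norm_integral_le_of_norm_le_const hy.2

theorem memLp_integralFst (f : Lp ℝ ∞ (μ.prod ν)) : MemLp (integralFst μ f) ∞ (μ.prod ν) := by
  have hf := Lp.aestronglyMeasurable f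
  have hmeas : AEStronglyMeasurable (integralFst μ f) (μ.prod ν) :=
    ⟨integralFst μ (hf.mk _),
      hf.stronglyMeasurable_mk.integral_prod_left'.comp_measurable measurable_snd,
      integralFst_congr_ae hf.ae_eq_mk⟩
  exact memLp_top_of_bound hmeas _ (ae_norm_integralFst_le f)

theorem integralFst_add (f g : Lp ℝ ∞ (μ.prod ν)) :
    integralFst μ ⇑(f + g) =ᵐ[μ.prod ν] integralFst μ f + integralFst μ g := by
  refine (integralFst_congr_ae (Lp.coeFn_add f g)).trans ?_
  have hsnd := Measure.quasiMeasurePreserving_snd (μ := μ) (ν := ν)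
  filter_upwards [hsnd.ae (ae_integrable_section_and_norm_le f),
    hsnd.ae (ae_integrable_section_and_norm_le g)] with q hf hg
  exact integral_add hf.1 hg.1

theorem integralFst_smul (c : ℝ) (f : Lp ℝ ∞ (μ.prod ν)) :
    integralFst μ ⇑(c • f) =ᵐ[μ.prod ν] c • integralFst μ f :=
  (integralFst_congr_ae (Lp.coeFn_smul c f)).trans <|
    Eventually.of_forall fun _ => integral_smul c _

variable (μ ν) in
noncomputable def integralFstCLM : Lp ℝ ∞ (μ.prod ν) →L[ℝ] Lp ℝ ∞ (μ.prod ν) :=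
  LinearMap.mkContinuous
    { toFun := fun f => (memLp_integralFst f).toLp _
      map_add' := fun f g => by
        rw [← MemLp.toLp_add]
        exact MemLp.toLp_congr _ _ (integralFst_add f g)
      map_smul' := fun c f => by
        rw [RingHom.id_apply, ← MemLp.toLp_const_smul]
        exact MemLp.toLp_congr _ _ (integralFst_smul c f) }
    (μ.real univ) fun f => by
      rw [mul_comm]
      refine Lp.norm_le_of_ae_bound_top (f := (memLp_integralFst f).toLp _) (by positivity) ?_
      filter_upwards [(memLp_integralFst f).coeFn_toLp, ae_norm_integralFst_le f] with q hq hle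
      simpa only [hq] using hle

theorem coeFn_integralFstCLM (f : Lp ℝ ∞ (μ.prod ν)) :
    integralFstCLM μ ν f =ᵐ[μ.prod ν] integralFst μ f :=
  (memLp_integralFst f).coeFn_toLp

theorem integralFstCLM_nonneg {f : Lp ℝ ∞ (μ.prod ν)} (hf : 0 ≤ f) :
    0 ≤ integralFstCLM μ ν f := by
  rw [← Lp.coeFn_nonneg] at hf ⊢
  have hsec : ∀ᵐ y ∂ν, 0 ≤ ∫ t, f (t, y) ∂μ := by
    filter_upwards [ae_ae_swap_of_ae_prod hf] with y hy using integral_nonneg_of_ae hy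
  filter_upwards [coeFn_integralFstCLM f, Measure.quasiMeasurePreserving_snd.ae hsec]
    with q hq hnonneg
  rw [Pi.zero_apply, hq]
  exact hnonneg

theorem integralFstCLM_comp_eq_comp_of_mul_snd (φ : β → ℝ)
    {M : Lp ℝ ∞ (μ.prod ν) →L[ℝ] Lp ℝ ∞ (μ.prod ν)}
    (hM : ∀ f : Lp ℝ ∞ (μ.prod ν), M f =ᵐ[μ.prod ν] fun q => φ q.2 * f q) :
    (integralFstCLM μ ν).comp M = M.comp (integralFstCLM μ ν) := by
  refine ContinuousLinearMap.ext fun f => Lp.ext ?_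
  have hleft : integralFstCLM μ ν (M f) =ᵐ[μ.prod ν] fun q => φ q.2 * integralFst μ f q :=
    (coeFn_integralFstCLM (M f)).trans <| (integralFst_congr_ae (hM f)).trans <|
      Eventually.of_forall fun q => integral_const_mul (φ q.2) _
  have hright : M (integralFstCLM μ ν f) =ᵐ[μ.prod ν] fun q => φ q.2 * integralFst μ f q := by
    filter_upwards [hM (integralFstCLM μ ν f), coeFn_integralFstCLM f] with q hq hR
    rw [hq, hR]
  exact hleft.trans hright.symm

theorem integralFstCLM_indicator_fst {s : Set α} (hs : MeasurableSet s) :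
    integralFstCLM μ ν (((memLp_top_const (1 : ℝ)).indicator (measurable_fst hs)).toLp _)
      =ᵐ[μ.prod ν] fun _ => μ.real s := by
  refine (coeFn_integralFstCLM _).trans <| (integralFst_congr_ae (MemLp.coeFn_toLp _)).trans ?_
  exact Eventually.of_forall fun _ => integral_indicator_one hs

theorem exists_abs_inf_abs_eq_zero_and_integralFstCLM_ne_zero [NeZero ν] {s : Set α}
    (hs : MeasurableSet s) (hμs : μ s ≠ 0) (hμsc : μ sᶜ ≠ 0) :
    ∃ f g : Lp ℝ ∞ (μ.prod ν),
      |f| ⊓ |g| = 0 ∧ |integralFstCLM μ ν f| ⊓ |integralFstCLM μ ν g| ≠ 0 := by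
  have hf := (memLp_top_const (μ := μ.prod ν) (1 : ℝ)).indicator (measurable_fst hs)
  have hg := (memLp_top_const (μ := μ.prod ν) (1 : ℝ)).indicator (measurable_fst hs.compl)
  refine ⟨hf.toLp _, hg.toLp _, ?_, ?_⟩
  · rw [Lp.abs_inf_abs_eq_zero_iff]
    filter_upwards [hf.coeFn_toLp, hg.coeFn_toLp] with q hfq hgq
    rw [hfq, hgq]
    by_cases h : q.1 ∈ s <;> simp [h]
  · have : (ae (μ.prod ν)).NeBot := by
      rw [ae_neBot, ← Measure.measure_univ_ne_zero, ← univ_prod_univ, Measure.prod_prod]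
      exact mul_ne_zero (fun h => hμs (measure_mono_null (subset_univ s) h))
        (Measure.measure_univ_ne_zero.2 (NeZero.ne ν))
    rw [Ne, Lp.abs_inf_abs_eq_zero_iff]
    intro h
    obtain ⟨q, hq, hfq, hgq⟩ := (h.and ((integralFstCLM_indicator_fst hs).and
      (integralFstCLM_indicator_fst hs.compl))).exists
    rw [hfq, hgq, abs_of_nonneg measureReal_nonneg, abs_of_nonneg measureReal_nonneg] at hq
    have hpos : 0 < μ.real s ⊓ μ.real sᶜ :=
      lt_min (toReal_pos hμs (measure_ne_top μ s)) (toReal_pos hμsc (measure_ne_top μ sᶜ))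
    exact hpos.ne' hq

end IntegralFst

/-- on `L_∞([0,1]²)` the averaging operator `(Rf)(x,y) = ∫₀¹ f(t,y) dt` is
positive, bounded, commutes with `M_φ` for `φ(x,y) = y`, the multiplier `φ` has no flat
(every level set is null), yet `R` is not disjointness preserving. -/
theorem averaging_operator_not_disjointness_preserving :
    ∀ μ : Measure (ℝ × ℝ), μ =
        ((volume.restrict (Set.Icc (0:ℝ) 1)).prod (volume.restrict (Set.Icc (0:ℝ) 1))) →
    ∃ R : Lp ℝ ∞ μ →L[ℝ] Lp ℝ ∞ μ,
      (∀ f : Lp ℝ ∞ μ, (R f : ℝ × ℝ → ℝ) =ᵐ[μ]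
        fun q => ∫ t in Set.Icc (0:ℝ) 1, (f : ℝ × ℝ → ℝ) (t, q.2)) ∧
      (∀ f : Lp ℝ ∞ μ, 0 ≤ f → 0 ≤ R f) ∧
      (∀ Mφ : Lp ℝ ∞ μ →L[ℝ] Lp ℝ ∞ μ,
        (∀ f : Lp ℝ ∞ μ, (Mφ f : ℝ × ℝ → ℝ) =ᵐ[μ] fun q => q.2 * (f : ℝ × ℝ → ℝ) q) →
        R.comp Mφ = Mφ.comp R) ∧
      (∀ γ : ℝ, μ {q : ℝ × ℝ | q.2 = γ} = 0) ∧
      (∃ f g : Lp ℝ ∞ μ, |f| ⊓ |g| = 0 ∧ |R f| ⊓ |R g| ≠ 0) := by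
  rintro μ rfl
  have : IsProbabilityMeasure (volume.restrict (Icc (0:ℝ) 1)) := ⟨by simp⟩
  have hleft : volume.restrict (Icc (0:ℝ) 1) (Iic (1 / 2)) ≠ 0 := by
    have : Iic (1 / 2 : ℝ) ∩ Icc 0 1 = Icc 0 (1 / 2) := by
      ext x; simp only [mem_inter_iff, mem_Iic, mem_Icc]; grind
    rw [Measure.restrict_apply measurableSet_Iic, this]
    norm_num
  have hright : volume.restrict (Icc (0:ℝ) 1) (Iic (1 / 2))ᶜ ≠ 0 := by
    have : (Iic (1 / 2 : ℝ))ᶜ ∩ Icc 0 1 = Ioc (1 / 2) 1 := by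
      ext x; simp only [mem_inter_iff, mem_compl_iff, mem_Iic, mem_Icc, mem_Ioc]; grind
    rw [Measure.restrict_apply measurableSet_Iic.compl, this]
    norm_num
  exact ⟨integralFstCLM _ _, coeFn_integralFstCLM, fun _ => integralFstCLM_nonneg,
    fun _ => integralFstCLM_comp_eq_comp_of_mul_snd id,
    fun γ => Measure.quasiMeasurePreserving_snd.preimage_null (measure_singleton γ),
    exists_abs_inf_abs_eq_zero_and_integralFstCLM_ne_zero measurableSet_Iic hleft hright⟩
end
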